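/- arXiv:2111.12069 — 6 statements merged into one kernel-verified Lean document; each statement's English description precedes it below -/
import Mathlib

section
/- Let X > 0, c ≥ 0 be real numbers, M ≥ 1 an integer, α a real number, and let φ₁, φ₂ : ℤ → ℝ be real-valued functions. Let (a_n), (b_n) be complex numbers with |a_n|, |b_n| ≤ 1. Let N(M, δ) denote the number of quadruples (m₁,m₂,m₃,m₄) of integers in [M+1, 2M]⁴ with |φ₁(m₁) - φ₁(m₂) + φ₂(m₃) - φ₂(m₄)| ≤ δ M^α. Then (1/X) ∫_c^{c+X} |∑_{m=M+1}^{2M} a_m e(x φ₁(m)/M^α)|² · |∑_{n=M+1}^{2M} b_n e(x φ₂(n)/M^α)|² dx ≤ (π²/4) N(M, 2/X). -/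
open Real MeasureTheory FourierTransform Complex

lemma hasDerivAt_aux (A c : ℂ) (hA : A ≠ 0) (x : ℝ) :
    HasDerivAt (fun v : ℝ => Complex.exp (A * v) * ((c + v) / A - 1 / A ^ 2))
      (Complex.exp (A * x) * (c + x)) x := by
  have hv : HasDerivAt (fun v : ℝ => (v : ℂ)) 1 x := by
    simpa using (hasDerivAt_id x).ofReal_comp
  have h1 : HasDerivAt (fun v : ℝ => Complex.exp (A * v)) (A * Complex.exp (A * x)) x := by
    have := ((Complex.hasDerivAt_exp (A * x)).comp x (hv.const_mul A))
    simpa [mul_comm, Function.comp_def] using this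
  have h2 : HasDerivAt (fun v : ℝ => ((c + v) / A - 1 / A ^ 2)) (1 / A) x :=
    ((hv.const_add c).div_const A).sub_const (1 / A ^ 2)
  have := h1.mul h2
  convert this using 1
  · rfl
  · rfl
  field_simp
  ring

lemma int_aux (A c : ℂ) (hA : A ≠ 0) (a b : ℝ) :
    ∫ v in a..b, Complex.exp (A * v) * (c + v)
      = Complex.exp (A * b) * ((c + b) / A - 1 / A ^ 2)
        - Complex.exp (A * a) * ((c + a) / A - 1 / A ^ 2) := by
  apply intervalIntegral.integral_eq_sub_of_hasDerivAt
  · exact fun x _ => hasDerivAt_aux A c hA x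
  · apply Continuous.intervalIntegrable
    fun_prop

lemma int_aux_sub (A c : ℂ) (hA : A ≠ 0) (a b : ℝ) :
    ∫ v in a..b, Complex.exp (A * v) * (c - v)
      = Complex.exp (A * b) * ((c - b) / A + 1 / A ^ 2)
        - Complex.exp (A * a) * ((c - a) / A + 1 / A ^ 2) := by
  apply intervalIntegral.integral_eq_sub_of_hasDerivAt
  · intro x _
    have hv : HasDerivAt (fun v : ℝ => (v : ℂ)) 1 x := by
      simpa using (hasDerivAt_id x).ofReal_comp
    have h1 : HasDerivAt (fun v : ℝ => Complex.exp (A * v)) (A * Complex.exp (A * x)) x := by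
      have := ((Complex.hasDerivAt_exp (A * x)).comp x (hv.const_mul A))
      simpa [mul_comm, Function.comp_def] using this
    have h2 : HasDerivAt (fun v : ℝ => ((c - v) / A + 1 / A ^ 2)) (-1 / A) x := by
      have := (((hv.const_sub c).div_const A).add_const (1 / A ^ 2))
      simpa [neg_div] using this
    have := h1.mul h2
    convert this using 1
    · rfl
    · rfl
    field_simp
    ring
  · apply Continuous.intervalIntegrable
    fun_prop

noncomputable def triR (ξ : ℝ) : ℝ := max 0 (1 - |ξ|)
noncomputable def tri (ξ : ℝ) : ℂ := (triR ξ : ℂ)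
noncomputable def sinc2 (u : ℝ) : ℝ := if u = 0 then 1 else Real.sin (π * u) ^ 2 / (π * u) ^ 2

open intervalIntegral in
lemma real_int_left : (∫ x in (-1:ℝ)..0, (1 + x)) = 1/2 := by
  rw [intervalIntegral.integral_add intervalIntegrable_const intervalIntegrable_id]
  simp [integral_id]
  norm_num

open intervalIntegral in
lemma real_int_right : (∫ x in (0:ℝ)..1, (1 - x)) = 1/2 := by
  rw [intervalIntegral.integral_sub intervalIntegrable_const intervalIntegrable_id]
  simp [integral_id]
  norm_num

lemma triR_eq_zero {ξ : ℝ} (h : 1 ≤ |ξ|) : triR ξ = 0 := max_eq_left (by linarith)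

lemma triR_eq_left {ξ : ℝ} (h1 : -1 ≤ ξ) (h2 : ξ ≤ 0) : triR ξ = 1 + ξ := by
  rw [triR, _root_.abs_of_nonpos h2, sub_neg_eq_add]; exact max_eq_right (by linarith)

lemma triR_eq_right {ξ : ℝ} (h1 : 0 ≤ ξ) (h2 : ξ ≤ 1) : triR ξ = 1 - ξ := by
  rw [triR, _root_.abs_of_nonneg h1]; exact max_eq_right (by linarith)

lemma fourier_tri (u : ℝ) : 𝓕 tri u = (sinc2 u : ℂ) := by
  have hsupp : ∀ x ∉ Set.Ioc (-1:ℝ) 1, Complex.exp ((-2 * π * (x*u) : ℝ) * Complex.I) * tri x = 0 := by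
    intro x hx
    have : 1 ≤ |x| := by
      simp only [Set.mem_Ioc, not_and_or, not_lt, not_le] at hx
      cases hx <;> cases abs_cases x <;> linarith
    simp [tri, triR_eq_zero this]
  have key : 𝓕 tri u = ∫ x in (-1:ℝ)..1, Complex.exp ((-2 * π * (x*u) : ℝ) * Complex.I) * tri x := by
    rw [Real.fourier_eq']
    rw [intervalIntegral.integral_of_le (by norm_num)]
    rw [setIntegral_eq_integral_of_forall_compl_eq_zero hsupp]
    simp [RCLike.inner_apply, smul_eq_mul, mul_comm]
  rcases eq_or_ne u 0 with rfl | hu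
  · rw [key]
    have : ∀ x : ℝ, Complex.exp ((-2 * π * (x*(0:ℝ)) : ℝ) * Complex.I) * tri x = tri x := by
      intro x; norm_num
    simp_rw [this]
    rw [show ((sinc2 0 : ℝ) : ℂ) = 1 by simp [sinc2]]
    rw [← intervalIntegral.integral_add_adjacent_intervals (a := (-1:ℝ)) (b := 0) (c := 1)
      (by apply Continuous.intervalIntegrable; unfold tri triR; fun_prop)
      (by apply Continuous.intervalIntegrable; unfold tri triR; fun_prop)]
    have e1 : (∫ x in (-1:ℝ)..0, tri x) = ∫ x in (-1:ℝ)..0, ((1 + x : ℝ) : ℂ) := by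
      apply intervalIntegral.integral_congr
      intro x hx
      rw [Set.uIcc_of_le (by norm_num)] at hx
      simp [tri, triR_eq_left hx.1 hx.2]
    have e2 : (∫ x in (0:ℝ)..1, tri x) = ∫ x in (0:ℝ)..1, ((1 - x : ℝ) : ℂ) := by
      apply intervalIntegral.integral_congr
      intro x hx
      rw [Set.uIcc_of_le (by norm_num)] at hx
      simp [tri, triR_eq_right hx.1 hx.2]
    rw [e1, e2, intervalIntegral.integral_ofReal, intervalIntegral.integral_ofReal]
    rw [real_int_left, real_int_right]; norm_num
  · set A : ℂ := ((-2 * π * u : ℝ) : ℂ) * Complex.I with hA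
    have hAne : A ≠ 0 := by
      have h1 : (-2 * π * u : ℝ) ≠ 0 := by
        simp [Real.pi_ne_zero, hu]
      exact mul_ne_zero (Complex.ofReal_ne_zero.2 h1) Complex.I_ne_zero
    rw [key, ← intervalIntegral.integral_add_adjacent_intervals (a := (-1:ℝ)) (b := 0) (c := 1)
      (by apply Continuous.intervalIntegrable; unfold tri triR; fun_prop)
      (by apply Continuous.intervalIntegrable; unfold tri triR; fun_prop)]
    have e1 : (∫ x in (-1:ℝ)..0, Complex.exp ((-2 * π * (x*u) : ℝ) * Complex.I) * tri x)
        = ∫ x in (-1:ℝ)..0, Complex.exp (A * x) * (1 + x) := by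
      apply intervalIntegral.integral_congr
      intro x hx
      rw [Set.uIcc_of_le (by norm_num)] at hx
      simp only [tri]; rw [triR_eq_left hx.1 hx.2]
      have harg : ((-2 * π * (x*u) : ℝ) : ℂ) * Complex.I = A * x := by push_cast [hA]; ring
      rw [harg]; push_cast; ring
    have e2 : (∫ x in (0:ℝ)..1, Complex.exp ((-2 * π * (x*u) : ℝ) * Complex.I) * tri x)
        = ∫ x in (0:ℝ)..1, Complex.exp (A * x) * (1 - x) := by
      apply intervalIntegral.integral_congr
      intro x hx
      rw [Set.uIcc_of_le (by norm_num)] at hx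
      simp only [tri]; rw [triR_eq_right hx.1 hx.2]
      have harg : ((-2 * π * (x*u) : ℝ) : ℂ) * Complex.I = A * x := by push_cast [hA]; ring
      rw [harg]; push_cast; ring
    rw [e1, e2, int_aux A 1 hAne, int_aux_sub A 1 hAne]
    have hexp : Complex.exp (A * (-1:ℝ)) = Complex.exp (-A) := by norm_num
    have hexp1 : Complex.exp (A * (1:ℝ)) = Complex.exp A := by norm_num
    have hexp0 : Complex.exp (A * (0:ℝ)) = 1 := by norm_num [Complex.exp_zero]
    rw [hexp, hexp1, hexp0]
    have hsum : Complex.exp A + Complex.exp (-A) = ((2 * Real.cos (2*π*u) : ℝ) : ℂ) := by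
      rw [hA, show -(((-2 * π * u : ℝ):ℂ) * Complex.I) = ((2 * π * u : ℝ):ℂ) * Complex.I by push_cast; ring]
      rw [Complex.exp_mul_I, Complex.exp_mul_I]
      rw [show ((-2 * π * u : ℝ):ℂ) = -((2 * π * u : ℝ):ℂ) by push_cast; ring]
      rw [Complex.cos_neg, Complex.sin_neg]
      push_cast [Complex.ofReal_cos]
      ring
    have hA2 : A ^ 2 = ((-((2*π*u)^2) : ℝ) : ℂ) := by
      rw [hA, mul_pow, Complex.I_sq]
      push_cast
      ring
    have hL : 1 * ((1 + (0:ℝ)) / A - 1 / A ^ 2) - Complex.exp (-A) * (((1:ℂ) + ((-1:ℝ):ℂ)) / A - 1 / A ^ 2)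
        + (Complex.exp A * (((1:ℂ) - ((1:ℝ):ℂ)) / A + 1 / A ^ 2) - 1 * (((1:ℂ) - ((0:ℝ):ℂ)) / A + 1 / A ^ 2))
        = (Complex.exp A + Complex.exp (-A) - 2) / A ^ 2 := by
      have h2 : A ^ 2 ≠ 0 := pow_ne_zero _ hAne
      field_simp
      push_cast
      ring
    rw [hL, hsum, hA2]
    rw [show ((2 * Real.cos (2*π*u) : ℝ) : ℂ) - 2 = ((2 * Real.cos (2*π*u) - 2 : ℝ) : ℂ) by push_cast; ring]
    rw [← Complex.ofReal_div]
    norm_cast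
    have hc : Real.cos (2*π*u) = 2 * Real.cos (π*u) ^ 2 - 1 := by
      rw [show 2*π*u = 2*(π*u) by ring, Real.cos_two_mul]
    have hs : Real.sin (π*u) ^ 2 = 1 - Real.cos (π*u) ^ 2 := Real.sin_sq _
    have hpu : (π * u) ≠ 0 := mul_ne_zero Real.pi_ne_zero hu
    rw [sinc2, if_neg hu]
    rw [div_eq_div_iff (by simpa using hpu) (pow_ne_zero 2 hpu)]
    nlinarith [sq_nonneg (π*u)]

lemma sinc2_nonneg (u : ℝ) : 0 ≤ sinc2 u := by
  unfold sinc2; split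
  · norm_num
  · positivity

lemma sinc2_le_one (u : ℝ) : sinc2 u ≤ 1 := by
  unfold sinc2; split
  · norm_num
  · rename_i hu
    have h1 : (π * u) ^ 2 ≠ 0 := pow_ne_zero _ (mul_ne_zero Real.pi_ne_zero hu)
    rw [div_le_one (lt_of_le_of_ne (sq_nonneg _) (Ne.symm h1))]
    exact Real.sin_sq_le_sq

lemma sinc2_neg (u : ℝ) : sinc2 (-u) = sinc2 u := by
  unfold sinc2
  simp [neg_eq_zero, mul_neg, Real.sin_neg]

lemma sinc2_tail {u : ℝ} (hu : 1 ≤ |u|) : sinc2 u ≤ (u ^ 2)⁻¹ := by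
  have hu0 : u ≠ 0 := by intro h; rw [h] at hu; simp at hu; linarith
  rw [sinc2, if_neg hu0]
  have hpi : (1:ℝ) ≤ π ^ 2 := by nlinarith [Real.pi_gt_three]
  have h2 : (0:ℝ) < u ^ 2 := by positivity
  rw [div_le_iff₀ (by positivity), mul_pow]
  calc Real.sin (π*u) ^ 2 ≤ 1 := Real.sin_sq_le_one _
    _ ≤ π ^ 2 := hpi
    _ = (u^2)⁻¹ * (π ^ 2 * u ^ 2) := by field_simp

lemma sinc2_lower {u : ℝ} (hu : |u| ≤ 1/2) : 4 / π ^ 2 ≤ sinc2 u := by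
  have hpi : (0:ℝ) < π := Real.pi_pos
  rcases eq_or_ne u 0 with rfl | hu0
  · rw [sinc2, if_pos rfl]
    rw [div_le_one (by positivity)]
    nlinarith [Real.pi_gt_three]
  · rw [sinc2, if_neg hu0]
    have h1 : |π * u| ≤ π / 2 := by
      rw [abs_mul, abs_of_pos hpi]
      calc π * |u| ≤ π * (1/2) := by nlinarith [abs_nonneg u]
        _ = π / 2 := by ring
    have h2 := Real.mul_abs_le_abs_sin h1
    have h3 : (2 / π * |π * u|) ^ 2 ≤ |Real.sin (π * u)| ^ 2 := by
      apply pow_le_pow_left₀ (by positivity) h2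
    rw [_root_.sq_abs] at h3
    have h4 : (2 / π * |π * u|) ^ 2 = 4 / π ^ 2 * (π * u) ^ 2 := by
      rw [mul_pow, _root_.sq_abs]; field_simp; ring
    rw [le_div_iff₀ (by positivity)]
    nlinarith [sq_nonneg (π * u)]

lemma sinc2_measurable : Measurable sinc2 := by
  unfold sinc2
  exact Measurable.ite (measurableSet_eq) measurable_const (by fun_prop)

lemma sinc2_integrable : Integrable sinc2 := by
  have hIoc : IntegrableOn sinc2 (Set.Ioc (-1:ℝ) 1) := by
    apply Integrable.mono' (g := fun _ => (1:ℝ))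
    · exact integrableOn_const measure_Ioc_lt_top.ne
    · exact sinc2_measurable.aestronglyMeasurable.restrict
    · filter_upwards with x
      rw [Real.norm_eq_abs, _root_.abs_of_nonneg (sinc2_nonneg x)]
      exact sinc2_le_one x
  have hIoi : IntegrableOn sinc2 (Set.Ioi (1:ℝ)) := by
    apply Integrable.mono' (g := fun u => u ^ ((-2:ℝ)))
    · exact integrableOn_Ioi_rpow_of_lt (by norm_num) zero_lt_one
    · exact sinc2_measurable.aestronglyMeasurable.restrict
    · rw [ae_restrict_iff' measurableSet_Ioi]
      filter_upwards with x hx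
      have hx1 : (1:ℝ) < x := hx
      rw [Real.norm_eq_abs, _root_.abs_of_nonneg (sinc2_nonneg x)]
      have := sinc2_tail (u := x) (by rw [abs_of_pos (by linarith)]; linarith)
      calc sinc2 x ≤ (x^2)⁻¹ := this
        _ = x ^ ((-2:ℝ)) := by
          rw [show (-2:ℝ) = -(2:ℕ) by norm_num, Real.rpow_neg (by linarith), Real.rpow_natCast]
  have hIic : IntegrableOn sinc2 (Set.Iic (-1:ℝ)) := by
    have hIci : IntegrableOn sinc2 (Set.Ici (1:ℝ)) := by
      rwa [integrableOn_Ici_iff_integrableOn_Ioi]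
    have h1 : Integrable (Set.indicator (Set.Ici (1:ℝ)) sinc2) := by
      rwa [integrable_indicator_iff measurableSet_Ici]
    have h2 := h1.comp_neg
    have h3 : (fun x => Set.indicator (Set.Ici (1:ℝ)) sinc2 (-x)) = Set.indicator (Set.Iic (-1:ℝ)) sinc2 := by
      ext x
      by_cases hx : x ≤ -1
      · rw [Set.indicator_of_mem (by simp only [Set.mem_Ici]; linarith),
          Set.indicator_of_mem (by simpa using hx)]
        exact sinc2_neg x
      · rw [Set.indicator_of_notMem (by simp only [Set.mem_Ici, not_le]; linarith),
          Set.indicator_of_notMem (by simpa using hx)]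
    rw [h3] at h2
    rwa [integrable_indicator_iff measurableSet_Iic] at h2
  have huniv : (Set.univ : Set ℝ) = Set.Iic (-1) ∪ (Set.Ioc (-1) 1 ∪ Set.Ioi 1) := by
    ext x
    simp only [Set.mem_univ, Set.mem_union, Set.mem_Iic, Set.mem_Ioc, Set.mem_Ioi, true_iff]
    rcases le_or_gt x (-1) with h | h
    · exact Or.inl h
    rcases le_or_gt x 1 with h' | h'
    · exact Or.inr (Or.inl ⟨h, h'⟩)
    · exact Or.inr (Or.inr h')
  rw [← integrableOn_univ, huniv]
  exact hIic.union (hIoc.union hIoi)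

lemma tri_continuous : Continuous tri := by unfold tri triR; fun_prop

lemma triR_zero {ξ : ℝ} (h : 1 ≤ |ξ|) : triR ξ = 0 := max_eq_left (by linarith)

lemma tri_integrable : Integrable tri := by
  apply Continuous.integrable_of_hasCompactSupport tri_continuous
  apply HasCompactSupport.intro (isCompact_Icc (a := (-1:ℝ)) (b := 1))
  intro x hx
  have : 1 ≤ |x| := by
    simp only [Set.mem_Icc, not_and_or, not_le] at hx
    cases hx <;> cases abs_cases x <;> linarith
  simp [tri, triR_zero this]

lemma fourier_tri_integrable : Integrable (𝓕 tri) := by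
  have h : 𝓕 tri = fun u => ((sinc2 u : ℝ) : ℂ) := funext fourier_tri
  rw [h]
  exact sinc2_integrable.ofReal

lemma tri_inversion (s : ℝ) :
    ∫ v : ℝ, Complex.exp (((2 * π * (v * s) : ℝ) : ℂ) * Complex.I) * (sinc2 v : ℂ) = tri s := by
  have h := Continuous.fourierInv_fourier_eq tri_continuous tri_integrable fourier_tri_integrable
  have h2 : 𝓕⁻ (𝓕 tri) s = tri s := by rw [h]
  rw [Real.fourierInv_eq'] at h2
  rw [← h2]
  congr 1
  ext v
  rw [fourier_tri]
  simp [RCLike.inner_apply, smul_eq_mul, mul_comm]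

lemma key_integral (X c₀ β : ℝ) (hX : 0 < X) :
    ∫ x : ℝ, Complex.exp (((2 * π * (β * x) : ℝ) : ℂ) * Complex.I) * ((sinc2 ((x - c₀)/X) : ℝ) : ℂ)
      = (X : ℂ) * Complex.exp (((2 * π * (β * c₀) : ℝ) : ℂ) * Complex.I) * tri (X * β) := by
  set φ : ℝ → ℂ := fun u =>
    Complex.exp (((2 * π * (β * (X * u + c₀)) : ℝ) : ℂ) * Complex.I) * ((sinc2 u : ℝ) : ℂ) with hφ
  have h1 : ∀ x : ℝ, Complex.exp (((2 * π * (β * x) : ℝ) : ℂ) * Complex.I) * ((sinc2 ((x - c₀)/X) : ℝ) : ℂ)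
      = φ ((x - c₀)/X) := by
    intro x
    have hx : X * ((x - c₀)/X) + c₀ = x := by field_simp; ring
    simp only [hφ, hx]
  simp_rw [h1]
  have h2 : (∫ x : ℝ, φ ((x - c₀)/X)) = ∫ x : ℝ, φ (x / X) :=
    integral_sub_right_eq_self (fun y => φ (y / X)) c₀
  rw [h2, Measure.integral_comp_div φ X]
  have h3 : ∀ u : ℝ, φ u
      = (Complex.exp (((2 * π * (u * (X * β)) : ℝ) : ℂ) * Complex.I) * ((sinc2 u : ℝ) : ℂ))
        * Complex.exp (((2 * π * (β * c₀) : ℝ) : ℂ) * Complex.I) := by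
    intro u
    simp only [hφ]
    conv_rhs => rw [mul_right_comm, ← Complex.exp_add]
    congr 2
    push_cast
    ring
  simp_rw [h3]
  rw [integral_mul_const, tri_inversion (X * β)]
  rw [abs_of_pos hX]
  rw [real_smul]
  ring

lemma combine_exp (u v w z α1 α2 α3 α4 : ℂ) :
    (u * Complex.exp α1) * (v * Complex.exp α2) * ((w * Complex.exp α3) * (z * Complex.exp α4))
      = (u * v * (w * z)) * Complex.exp (α1 + α2 + (α3 + α4)) := by
  rw [Complex.exp_add, Complex.exp_add, Complex.exp_add]; ring

set_option maxHeartbeats 1000000 in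
theorem stmt_3 (X c : ℝ) (hX : 0 < X) (hc : 0 ≤ c) (M : ℕ) (hM : 1 ≤ M) (α : ℝ)
    (φ₁ φ₂ : ℤ → ℝ) (a b : ℤ → ℂ) (ha : ∀ n, ‖a n‖ ≤ 1) (hb : ∀ n, ‖b n‖ ≤ 1) :
    (1 / X) * ∫ x in c..(c + X),
        ‖∑ m ∈ Finset.Icc ((M : ℤ) + 1) (2 * M), a m *
            Complex.exp (2 * (π : ℂ) * Complex.I * ((x * φ₁ m / (M : ℝ) ^ α : ℝ) : ℂ))‖ ^ 2 *
        ‖∑ n ∈ Finset.Icc ((M : ℤ) + 1) (2 * M), b n *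
            Complex.exp (2 * (π : ℂ) * Complex.I * ((x * φ₂ n / (M : ℝ) ^ α : ℝ) : ℂ))‖ ^ 2
      ≤ (π ^ 2 / 4) *
        ((((Finset.Icc ((M : ℤ) + 1) (2 * M) ×ˢ Finset.Icc ((M : ℤ) + 1) (2 * M)) ×ˢ
            (Finset.Icc ((M : ℤ) + 1) (2 * M) ×ˢ Finset.Icc ((M : ℤ) + 1) (2 * M))).filter
          (fun q => |φ₁ q.1.1 - φ₁ q.1.2 + φ₂ q.2.1 - φ₂ q.2.2|
            ≤ (2 / X) * (M : ℝ) ^ α)).card : ℝ) := by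
  classical
  set Mα : ℝ := (M : ℝ) ^ α with hMαdef
  set I : Finset ℤ := Finset.Icc ((M : ℤ) + 1) (2 * M) with hIdef
  have hMα0 : 0 < Mα := Real.rpow_pos_of_pos (by exact_mod_cast hM) α
  set c₀ : ℝ := c + X / 2 with hc₀def
  set S : ℝ → ℂ := fun x => ∑ m ∈ I, a m *
      Complex.exp (2 * (π : ℂ) * Complex.I * ((x * φ₁ m / Mα : ℝ) : ℂ)) with hSdef
  set T : ℝ → ℂ := fun x => ∑ n ∈ I, b n *
      Complex.exp (2 * (π : ℂ) * Complex.I * ((x * φ₂ n / Mα : ℝ) : ℂ)) with hTdef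
  show (1 / X) * ∫ x in c..(c + X), ‖S x‖ ^ 2 * ‖T x‖ ^ 2 ≤ _
  set g : ℝ → ℝ := fun x => ‖S x‖ ^ 2 * ‖T x‖ ^ 2 with hgdef
  set w : ℝ → ℝ := fun x => sinc2 ((x - c₀) / X) with hwdef
  set Q : Finset ((ℤ × ℤ) × ℤ × ℤ) := (I ×ˢ I) ×ˢ (I ×ˢ I) with hQdef
  set θ : (ℤ × ℤ) × ℤ × ℤ → ℝ := fun q => φ₁ q.1.1 - φ₁ q.1.2 + φ₂ q.2.1 - φ₂ q.2.2 with hθdef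
  set cq : (ℤ × ℤ) × ℤ × ℤ → ℂ := fun q =>
    a q.1.1 * (starRingEnd ℂ) (a q.1.2) * (b q.2.1 * (starRingEnd ℂ) (b q.2.2)) with hcqdef
  -- basic facts
  have hgnn : ∀ x : ℝ, 0 ≤ g x := fun x =>
    mul_nonneg (pow_nonneg (norm_nonneg _) 2) (pow_nonneg (norm_nonneg _) 2)
  have hbase : ∀ (ψ : ℤ → ℝ) (m : ℤ),
      Continuous fun x : ℝ => Complex.exp (2 * (π : ℂ) * Complex.I * ((x * ψ m / Mα : ℝ) : ℂ)) := by
    intro ψ m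
    apply Complex.continuous_exp.comp
    apply continuous_const.mul
    exact Complex.continuous_ofReal.comp ((continuous_id.mul continuous_const).div_const Mα)
  have hScont : Continuous S := by
    apply continuous_finset_sum
    intro m _
    exact continuous_const.mul (hbase φ₁ m)
  have hTcont : Continuous T := by
    apply continuous_finset_sum
    intro n _
    exact continuous_const.mul (hbase φ₂ n)
  have hgcont : Continuous g := by
    apply Continuous.mul <;> exact (Continuous.norm (by assumption)).pow 2
  have hexpnorm : ∀ r : ℝ, ‖Complex.exp (2 * (π : ℂ) * Complex.I * (r : ℂ))‖ = 1 := by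
    intro r
    rw [show 2 * (π : ℂ) * Complex.I * (r : ℂ) = ((2 * π * r : ℝ) : ℂ) * Complex.I by
      push_cast; ring]
    exact Complex.norm_exp_ofReal_mul_I _
  have hnormS : ∀ x : ℝ, ‖S x‖ ≤ (I.card : ℝ) := by
    intro x
    calc ‖S x‖ ≤ ∑ m ∈ I, ‖a m * Complex.exp (2 * (π : ℂ) * Complex.I * ((x * φ₁ m / Mα : ℝ) : ℂ))‖ :=
          norm_sum_le _ _
      _ ≤ ∑ m ∈ I, 1 := by
          apply Finset.sum_le_sum
          intro m _
          rw [norm_mul, hexpnorm]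
          simpa using ha m
      _ = (I.card : ℝ) := by simp
  have hnormT : ∀ x : ℝ, ‖T x‖ ≤ (I.card : ℝ) := by
    intro x
    calc ‖T x‖ ≤ ∑ n ∈ I, ‖b n * Complex.exp (2 * (π : ℂ) * Complex.I * ((x * φ₂ n / Mα : ℝ) : ℂ))‖ :=
          norm_sum_le _ _
      _ ≤ ∑ n ∈ I, 1 := by
          apply Finset.sum_le_sum
          intro n _
          rw [norm_mul, hexpnorm]
          simpa using hb n
      _ = (I.card : ℝ) := by simp
  have hgbdd : ∀ x : ℝ, ‖g x‖ ≤ (I.card : ℝ) ^ 2 * (I.card : ℝ) ^ 2 := by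
    intro x
    rw [hgdef]
    simp only
    rw [Real.norm_eq_abs, _root_.abs_of_nonneg (hgnn x)]
    apply mul_le_mul _ _ (pow_nonneg (norm_nonneg _) 2) (by positivity)
    · exact pow_le_pow_left₀ (norm_nonneg _) (hnormS x) 2
    · exact pow_le_pow_left₀ (norm_nonneg _) (hnormT x) 2
  have hSconj : ∀ x : ℝ, (starRingEnd ℂ) (S x) = ∑ m ∈ I, (starRingEnd ℂ) (a m) *
      Complex.exp (2 * (π : ℂ) * (-Complex.I) * ((x * φ₁ m / Mα : ℝ) : ℂ)) := by
    intro x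
    rw [hSdef]
    simp only [map_sum, map_mul]
    apply Finset.sum_congr rfl
    intro m _
    congr 1
    rw [← Complex.exp_conj]
    congr 1
    simp only [map_mul, Complex.conj_I, Complex.conj_ofReal, map_ofNat]
  have hTconj : ∀ x : ℝ, (starRingEnd ℂ) (T x) = ∑ n ∈ I, (starRingEnd ℂ) (b n) *
      Complex.exp (2 * (π : ℂ) * (-Complex.I) * ((x * φ₂ n / Mα : ℝ) : ℂ)) := by
    intro x
    rw [hTdef]
    simp only [map_sum, map_mul]
    apply Finset.sum_congr rfl
    intro n _
    congr 1
    rw [← Complex.exp_conj]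
    congr 1
    simp only [map_mul, Complex.conj_I, Complex.conj_ofReal, map_ofNat]
  have hg_expand : ∀ x : ℝ, ((g x : ℝ) : ℂ) = ∑ q ∈ Q, cq q *
      Complex.exp (((2 * π * (θ q / Mα * x) : ℝ) : ℂ) * Complex.I) := by
    intro x
    have h1 : ((g x : ℝ) : ℂ) = (S x * (starRingEnd ℂ) (S x)) * (T x * (starRingEnd ℂ) (T x)) := by
      rw [Complex.mul_conj, Complex.mul_conj, hgdef]
      simp only
      push_cast [Complex.normSq_eq_norm_sq]
      ring
    have hSS : S x * (starRingEnd ℂ) (S x) = ∑ p ∈ I ×ˢ I,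
        (a p.1 * Complex.exp (2 * (π : ℂ) * Complex.I * ((x * φ₁ p.1 / Mα : ℝ) : ℂ))) *
        ((starRingEnd ℂ) (a p.2) *
          Complex.exp (2 * (π : ℂ) * (-Complex.I) * ((x * φ₁ p.2 / Mα : ℝ) : ℂ))) := by
      rw [hSconj x, hSdef]
      simp only
      rw [Finset.sum_mul_sum, ← Finset.sum_product']
    have hTT : T x * (starRingEnd ℂ) (T x) = ∑ p ∈ I ×ˢ I,
        (b p.1 * Complex.exp (2 * (π : ℂ) * Complex.I * ((x * φ₂ p.1 / Mα : ℝ) : ℂ))) *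
        ((starRingEnd ℂ) (b p.2) *
          Complex.exp (2 * (π : ℂ) * (-Complex.I) * ((x * φ₂ p.2 / Mα : ℝ) : ℂ))) := by
      rw [hTconj x, hTdef]
      simp only
      rw [Finset.sum_mul_sum, ← Finset.sum_product']
    rw [h1, hSS, hTT, Finset.sum_mul_sum, ← Finset.sum_product']
    rw [hQdef]
    apply Finset.sum_congr rfl
    intro q _
    rw [combine_exp]
    rw [hcqdef, hθdef]
    simp only
    congr 1
    push_cast
    ring
  -- integrability
  have hw_int : Integrable w := by
    rw [hwdef]
    exact (sinc2_integrable.comp_div hX.ne').comp_sub_right c₀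
  have hgw_int : Integrable (fun x : ℝ => g x * w x) := by
    apply Integrable.bdd_mul hw_int hgcont.aestronglyMeasurable
    exact Filter.Eventually.of_forall hgbdd
  have hterm_int : ∀ q ∈ Q, Integrable (fun x : ℝ =>
      (Complex.exp (((2 * π * (θ q / Mα * x) : ℝ) : ℂ) * Complex.I) * ((w x : ℝ) : ℂ)) * cq q) := by
    intro q _
    apply Integrable.mul_const
    apply Integrable.bdd_mul hw_int.ofReal
    · apply Continuous.aestronglyMeasurable
      apply Complex.continuous_exp.comp
      apply Continuous.mul _ continuous_const
      exact Complex.continuous_ofReal.comp (continuous_const.mul (continuous_const.mul continuous_id))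
    · exact Filter.Eventually.of_forall (fun x => le_of_eq (Complex.norm_exp_ofReal_mul_I _))
  have hR : (((∫ x : ℝ, g x * w x) : ℝ) : ℂ) = ∑ q ∈ Q,
      ((X : ℂ) * Complex.exp (((2 * π * (θ q / Mα * c₀) : ℝ) : ℂ) * Complex.I)
        * tri (X * (θ q / Mα))) * cq q := by
    rw [show (((∫ x : ℝ, g x * w x) : ℝ) : ℂ) = ∫ x : ℝ, ((g x * w x : ℝ) : ℂ) from
      (integral_ofReal (𝕜 := ℂ)).symm]
    have hxeq : ∀ x : ℝ, ((g x * w x : ℝ) : ℂ) = ∑ q ∈ Q,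
        (Complex.exp (((2 * π * (θ q / Mα * x) : ℝ) : ℂ) * Complex.I) * ((w x : ℝ) : ℂ)) * cq q := by
      intro x
      rw [Complex.ofReal_mul, hg_expand x, Finset.sum_mul]
      apply Finset.sum_congr rfl
      intro q _
      ring
    simp_rw [hxeq]
    rw [integral_finset_sum Q hterm_int]
    apply Finset.sum_congr rfl
    intro q hq
    rw [integral_mul_const]
    congr 1
    have := key_integral X c₀ (θ q / Mα) hX
    simpa [hwdef] using this
  have htri_le : ∀ q ∈ Q, ‖tri (X * (θ q / Mα))‖ ≤ (if |θ q| ≤ 2 / X * Mα then (1:ℝ) else 0) := by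
    intro q _
    have htrinn : 0 ≤ triR (X * (θ q / Mα)) := le_max_left _ _
    have htri_norm : ‖tri (X * (θ q / Mα))‖ = triR (X * (θ q / Mα)) := by
      rw [tri, Complex.norm_real, Real.norm_eq_abs, _root_.abs_of_nonneg htrinn]
    split_ifs with h
    · rw [htri_norm, triR]
      apply max_le zero_le_one
      linarith [abs_nonneg (X * (θ q / Mα))]
    · push_neg at h
      have h1 : 2 * Mα < X * |θ q| := by
        have h2 := (mul_lt_mul_iff_right₀ hX).2 h
        calc 2 * Mα = X * (2 / X * Mα) := by field_simp
          _ < X * |θ q| := h2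
      have h3 : (1:ℝ) ≤ |X * (θ q / Mα)| := by
        rw [abs_mul, abs_div, abs_of_pos hX, abs_of_pos hMα0, ← mul_div_assoc,
          le_div_iff₀ hMα0, one_mul]
        linarith
      rw [htri_norm, triR_zero h3]
  have hca : ∀ n : ℤ, ‖(starRingEnd ℂ) (a n)‖ ≤ 1 := fun n => by
    rw [RCLike.norm_conj]; exact ha n
  have hcb : ∀ n : ℤ, ‖(starRingEnd ℂ) (b n)‖ ≤ 1 := fun n => by
    rw [RCLike.norm_conj]; exact hb n
  have hcq_le : ∀ q, ‖cq q‖ ≤ 1 := by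
    intro q
    rw [hcqdef]
    simp only [norm_mul]
    calc ‖a q.1.1‖ * ‖(starRingEnd ℂ) (a q.1.2)‖ * (‖b q.2.1‖ * ‖(starRingEnd ℂ) (b q.2.2)‖)
        ≤ 1 * 1 * (1 * 1) := by
          gcongr
          · exact ha _
          · exact hca _
          · exact hb _
          · exact hcb _
      _ = 1 := by norm_num
  have hsum_le : (∫ x : ℝ, g x * w x)
      ≤ X * ((Q.filter (fun q => |θ q| ≤ 2 / X * Mα)).card : ℝ) := by
    calc (∫ x : ℝ, g x * w x) ≤ ‖(((∫ x : ℝ, g x * w x) : ℝ) : ℂ)‖ := by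
          rw [Complex.norm_real, Real.norm_eq_abs]
          exact le_abs_self _
      _ = ‖∑ q ∈ Q, ((X : ℂ) * Complex.exp (((2 * π * (θ q / Mα * c₀) : ℝ) : ℂ) * Complex.I)
            * tri (X * (θ q / Mα))) * cq q‖ := by rw [hR]
      _ ≤ ∑ q ∈ Q, ‖((X : ℂ) * Complex.exp (((2 * π * (θ q / Mα * c₀) : ℝ) : ℂ) * Complex.I)
            * tri (X * (θ q / Mα))) * cq q‖ := norm_sum_le _ _
      _ ≤ ∑ q ∈ Q, X * (if |θ q| ≤ 2 / X * Mα then (1:ℝ) else 0) := by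
          apply Finset.sum_le_sum
          intro q hq
          rw [norm_mul, norm_mul, norm_mul, Complex.norm_real, Real.norm_eq_abs,
            abs_of_pos hX, Complex.norm_exp_ofReal_mul_I, mul_one]
          have hmm := mul_le_mul (htri_le q hq) (hcq_le q) (norm_nonneg _)
            (by positivity)
          calc X * ‖tri (X * (θ q / Mα))‖ * ‖cq q‖
              = X * (‖tri (X * (θ q / Mα))‖ * ‖cq q‖) := by ring
            _ ≤ X * ((if |θ q| ≤ 2 / X * Mα then (1:ℝ) else 0) * 1) :=
                mul_le_mul_of_nonneg_left hmm hX.le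
            _ = X * (if |θ q| ≤ 2 / X * Mα then (1:ℝ) else 0) := by ring
      _ = X * ((Q.filter (fun q => |θ q| ≤ 2 / X * Mα)).card : ℝ) := by
          rw [← Finset.mul_sum, Finset.sum_boole]
  have hpoint : ∀ x ∈ Set.Icc c (c + X), g x ≤ π ^ 2 / 4 * (g x * w x) := by
    intro x hx
    have hx1 : c ≤ x := hx.1
    have hx2 : x ≤ c + X := hx.2
    have habs : |(x - c₀) / X| ≤ 1 / 2 := by
      rw [abs_div, abs_of_pos hX, div_le_iff₀ hX, abs_le]
      constructor <;> [linarith [hc₀def]; linarith [hc₀def]]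
    have hw4 : 4 / π ^ 2 ≤ w x := by
      rw [hwdef]
      exact sinc2_lower habs
    have hπ : 0 < π := Real.pi_pos
    have key : π ^ 2 / 4 * (g x * (4 / π ^ 2)) = g x := by field_simp
    calc g x = π ^ 2 / 4 * (g x * (4 / π ^ 2)) := key.symm
      _ ≤ π ^ 2 / 4 * (g x * w x) := by
          apply mul_le_mul_of_nonneg_left _ (by positivity)
          exact mul_le_mul_of_nonneg_left hw4 (hgnn x)
  have hle : c ≤ c + X := by linarith
  have hint1 : IntervalIntegrable g volume c (c + X) := hgcont.intervalIntegrable _ _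
  have hint2 : IntervalIntegrable (fun x => π ^ 2 / 4 * (g x * w x)) volume c (c + X) :=
    (hgw_int.const_mul (π ^ 2 / 4)).intervalIntegrable
  have hmono := intervalIntegral.integral_mono_on hle hint1 hint2 hpoint
  have hconst : (∫ x in c..(c + X), π ^ 2 / 4 * (g x * w x))
      = π ^ 2 / 4 * ∫ x in c..(c + X), g x * w x :=
    intervalIntegral.integral_const_mul _ _
  have hext : (∫ x in c..(c + X), g x * w x) ≤ ∫ x : ℝ, g x * w x := by
    rw [intervalIntegral.integral_of_le hle]
    apply setIntegral_le_integral hgw_int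
    filter_upwards with x
    exact mul_nonneg (hgnn x) (by rw [hwdef]; exact sinc2_nonneg _)
  calc (1 / X) * ∫ x in c..(c + X), g x
      ≤ (1 / X) * (π ^ 2 / 4 * (X * ((Q.filter (fun q => |θ q| ≤ 2 / X * Mα)).card : ℝ))) := by
        apply mul_le_mul_of_nonneg_left _ (by positivity)
        calc (∫ x in c..(c + X), g x) ≤ ∫ x in c..(c + X), π ^ 2 / 4 * (g x * w x) := hmono
          _ = π ^ 2 / 4 * ∫ x in c..(c + X), g x * w x := hconst
          _ ≤ π ^ 2 / 4 * ∫ x : ℝ, g x * w x :=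
              mul_le_mul_of_nonneg_left hext (by positivity)
          _ ≤ π ^ 2 / 4 * (X * ((Q.filter (fun q => |θ q| ≤ 2 / X * Mα)).card : ℝ)) :=
              mul_le_mul_of_nonneg_left hsum_le (by positivity)
    _ = π ^ 2 / 4 * ((Q.filter (fun q => |θ q| ≤ 2 / X * Mα)).card : ℝ) := by
        field_simp
end

section
/- Let X > 0, M ≥ 1 an integer, α real, and φ₁, φ₂ : ℤ → ℝ. Let N(M, δ) be the number of quadruples (m₁,m₂,m₃,m₄) ∈ [M+1,2M]⁴ ∩ ℤ⁴ with |φ₁(m₁) - φ₁(m₂) + φ₂(m₃) - φ₂(m₄)| ≤ δ M^α. Then N(M, 1/X) ≤ (π²/X) ∫_0^{X/2} |∑_{n=M+1}^{2M} e(x φ₁(n)/M^α)|² · |∑_{n=M+1}^{2M} e(x φ₂(n)/M^α)|² dx. -/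
open Real

lemma integ_eq (T b : ℝ) (hT : 0 < T) (hb : b ≠ 0) :
    ∫ x in (0:ℝ)..T, (1 - x/T) * Real.cos (b*x)
      = (1 - Real.cos (b*T))/(b^2*T) := by
  have h : ∀ x ∈ Set.uIcc (0:ℝ) T,
      HasDerivAt (fun y => (1 - y/T) * Real.sin (b*y)/b - Real.cos (b*y)/(b^2*T))
        ((1 - x/T) * Real.cos (b*x)) x := by
    intro x _
    have h1 : HasDerivAt (fun y : ℝ => b * y) b x := by
      simpa using (hasDerivAt_id x).const_mul b
    have hs : HasDerivAt (fun y => Real.sin (b*y)) (Real.cos (b*x) * b) x :=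
      (Real.hasDerivAt_sin (b*x)).comp x h1
    have hc : HasDerivAt (fun y => Real.cos (b*y)) (-Real.sin (b*x) * b) x :=
      (Real.hasDerivAt_cos (b*x)).comp x h1
    have hl : HasDerivAt (fun y : ℝ => 1 - y/T) (-(1/T)) x := by
      simpa using ((hasDerivAt_id x).div_const T).const_sub 1
    have := ((hl.mul hs).div_const b).sub (hc.div_const (b^2*T))
    refine this.congr_deriv ?_
    field_simp
    ring
  rw [intervalIntegral.integral_eq_sub_of_hasDerivAt h
    (Continuous.intervalIntegrable (by continuity) _ _)]
  simp
  field_simp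
  ring

lemma integ_eq0 (T : ℝ) (hT : 0 < T) :
    ∫ x in (0:ℝ)..T, (1 - x/T) * Real.cos (0*x) = T/2 := by
  simp only [zero_mul, Real.cos_zero, mul_one]
  have h1 : IntervalIntegrable (fun _ : ℝ => (1:ℝ)) MeasureTheory.volume 0 T :=
    intervalIntegrable_const
  have h2 : IntervalIntegrable (fun x : ℝ => x/T) MeasureTheory.volume 0 T :=
    (Continuous.intervalIntegrable (by continuity) _ _)
  rw [intervalIntegral.integral_sub h1 h2]
  simp only [intervalIntegral.integral_div, integral_id, intervalIntegral.integral_const]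
  field_simp
  ring

lemma g_nonneg (T b : ℝ) (hT : 0 < T) :
    0 ≤ ∫ x in (0:ℝ)..T, (1 - x/T) * Real.cos (b*x) := by
  rcases eq_or_ne b 0 with rfl | hb
  · rw [integ_eq0 T hT]; positivity
  · rw [integ_eq T b hT hb]
    have h1 : Real.cos (b*T) ≤ 1 := Real.cos_le_one _
    have h2 : 0 < b^2*T := by positivity
    apply div_nonneg (by linarith) h2.le

lemma g_ge (T b : ℝ) (hT : 0 < T) (hbT : |b| * T ≤ π) :
    2*T/π^2 ≤ ∫ x in (0:ℝ)..T, (1 - x/T) * Real.cos (b*x) := by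
  have hpi := Real.pi_gt_three
  rcases eq_or_ne b 0 with rfl | hb
  · rw [integ_eq0 T hT]
    rw [div_le_div_iff₀ (by positivity) (by norm_num)]
    have h4 : (4:ℝ) ≤ π^2 := by nlinarith
    nlinarith
  · rw [integ_eq T b hT hb]
    have habs : Real.cos (b*T) = (Real.cos (|b| * T)) := by
      rcases abs_cases b with ⟨h, _⟩ | ⟨h, _⟩
      · rw [h]
      · rw [h]; rw [show -b*T = -(b*T) by ring, Real.cos_neg]
    set u := |b| * T with hu
    have hu0 : 0 < u := by positivity
    have hsin : 1 - Real.cos u = 2 * Real.sin (u/2)^2 := by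
      have h := Real.cos_two_mul (u/2)
      have h2 := Real.sin_sq_add_cos_sq (u/2)
      have he : (2:ℝ)*(u/2) = u := by ring
      rw [he] at h
      nlinarith
    have hls : u/π ≤ Real.sin (u/2) := by
      have := Real.mul_le_sin (x := u/2) (by positivity) (by linarith)
      calc u/π = 2/π * (u/2) := by field_simp
        _ ≤ _ := this
    have hsq : (u/π)^2 ≤ Real.sin (u/2)^2 := by
      have h0 : 0 ≤ u/π := by positivity
      nlinarith
    have hbt : b^2 * T = u^2 / T := by
      rw [hu]; rw [mul_pow, sq_abs]; field_simp
    rw [habs, hsin, hbt]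
    rw [div_le_div_iff₀ (by positivity) (by positivity)]
    have : (u/π)^2 = u^2/π^2 := by ring
    rw [this] at hsq
    have hπ2 : (0:ℝ) < π^2 := by positivity
    -- 2T * (u^2/T) ≤ 2 sin² * π², given u²/π² ≤ sin²
    have heq : 2 * T * (u ^ 2 / T) = 2 * u^2 := by field_simp
    rw [heq]
    have := (div_le_iff₀ hπ2).mp hsq
    nlinarith

lemma expand (s : Finset ℤ) (c : ℝ) (f g : ℤ → ℝ) :
    (∑ q ∈ (s ×ˢ s) ×ˢ (s ×ˢ s),
        Real.cos (c * (f q.1.1 - f q.1.2 + g q.2.1 - g q.2.2)))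
    = ‖∑ n ∈ s, Complex.exp (((c * f n : ℝ) : ℂ) * Complex.I)‖^2 *
      ‖∑ n ∈ s, Complex.exp (((c * g n : ℝ) : ℂ) * Complex.I)‖^2 := by
  set a : ℤ → ℂ := fun n => Complex.exp (((c * f n : ℝ) : ℂ) * Complex.I) with ha
  set b : ℤ → ℂ := fun n => Complex.exp (((c * g n : ℝ) : ℂ) * Complex.I) with hb
  have hterm : ∀ q : (ℤ × ℤ) × ℤ × ℤ,
      (a q.1.1 * (starRingEnd ℂ) (a q.1.2)) * (b q.2.1 * (starRingEnd ℂ) (b q.2.2))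
      = Complex.exp (((c * (f q.1.1 - f q.1.2 + g q.2.1 - g q.2.2) : ℝ) : ℂ) * Complex.I) := by
    intro q
    rw [ha, hb]
    simp only [← Complex.exp_conj, ← Complex.exp_add]
    congr 1
    simp only [map_mul, Complex.conj_ofReal, Complex.conj_I]
    push_cast
    ring
  have e1 : (∑ n ∈ s, a n) * (starRingEnd ℂ) (∑ n ∈ s, a n)
      = ∑ p ∈ s ×ˢ s, a p.1 * (starRingEnd ℂ) (a p.2) := by
    rw [map_sum, Finset.sum_mul_sum, Finset.sum_product]
  have e2 : (∑ n ∈ s, b n) * (starRingEnd ℂ) (∑ n ∈ s, b n)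
      = ∑ p ∈ s ×ˢ s, b p.1 * (starRingEnd ℂ) (b p.2) := by
    rw [map_sum, Finset.sum_mul_sum, Finset.sum_product]
  have key : (∑ q ∈ (s ×ˢ s) ×ˢ (s ×ˢ s),
        Complex.exp (((c * (f q.1.1 - f q.1.2 + g q.2.1 - g q.2.2) : ℝ) : ℂ) * Complex.I))
      = ((∑ n ∈ s, a n) * (starRingEnd ℂ) (∑ n ∈ s, a n)) *
        ((∑ n ∈ s, b n) * (starRingEnd ℂ) (∑ n ∈ s, b n)) := by
    rw [e1, e2, Finset.sum_mul_sum, Finset.sum_product]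
    exact Finset.sum_congr rfl fun p _ => Finset.sum_congr rfl fun q _ => (hterm (p, q)).symm
  have hre : (∑ q ∈ (s ×ˢ s) ×ˢ (s ×ˢ s),
        Complex.exp (((c * (f q.1.1 - f q.1.2 + g q.2.1 - g q.2.2) : ℝ) : ℂ) * Complex.I)).re
      = ∑ q ∈ (s ×ˢ s) ×ˢ (s ×ˢ s),
        Real.cos (c * (f q.1.1 - f q.1.2 + g q.2.1 - g q.2.2)) := by
    rw [Complex.re_sum]
    exact Finset.sum_congr rfl fun q _ => Complex.exp_ofReal_mul_I_re _
  rw [← hre, key]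
  rw [Complex.mul_conj, Complex.mul_conj]
  rw [← Complex.ofReal_mul]
  rw [Complex.ofReal_re]
  rw [Complex.normSq_eq_norm_sq, Complex.normSq_eq_norm_sq]

theorem stmt_4 (X : ℝ) (hX : 0 < X) (M : ℕ) (hM : 1 ≤ M) (α : ℝ) (φ₁ φ₂ : ℤ → ℝ) :
    ((((Finset.Icc ((M : ℤ) + 1) (2 * M) ×ˢ Finset.Icc ((M : ℤ) + 1) (2 * M)) ×ˢ
        (Finset.Icc ((M : ℤ) + 1) (2 * M) ×ˢ Finset.Icc ((M : ℤ) + 1) (2 * M))).filter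
      (fun q => |φ₁ q.1.1 - φ₁ q.1.2 + φ₂ q.2.1 - φ₂ q.2.2|
        ≤ (1 / X) * (M : ℝ) ^ α)).card : ℝ)
    ≤ (π ^ 2 / X) * ∫ x in (0:ℝ)..(X / 2),
        ‖∑ n ∈ Finset.Icc ((M : ℤ) + 1) (2 * M),
            Complex.exp (2 * (π : ℂ) * Complex.I * ((x * φ₁ n / (M : ℝ) ^ α : ℝ) : ℂ))‖ ^ 2 *
        ‖∑ n ∈ Finset.Icc ((M : ℤ) + 1) (2 * M),
            Complex.exp (2 * (π : ℂ) * Complex.I * ((x * φ₂ n / (M : ℝ) ^ α : ℝ) : ℂ))‖ ^ 2 := by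
  set s := Finset.Icc ((M : ℤ) + 1) (2 * M) with hs
  set A := (M : ℝ) ^ α with hA
  have hA0 : 0 < A := Real.rpow_pos_of_pos (by exact_mod_cast Nat.lt_of_lt_of_le Nat.zero_lt_one hM) α
  set T := X / 2 with hT
  have hT0 : 0 < T := by positivity
  have hπ := Real.pi_pos
  set P := (s ×ˢ s) ×ˢ (s ×ˢ s) with hP
  set θ : (ℤ × ℤ) × ℤ × ℤ → ℝ := fun q => φ₁ q.1.1 - φ₁ q.1.2 + φ₂ q.2.1 - φ₂ q.2.2 with hθ
  set Q := P.filter (fun q => |θ q| ≤ (1 / X) * A) with hQ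
  -- the weighted integrand, per quadruple
  set b : (ℤ × ℤ) × ℤ × ℤ → ℝ := fun q => 2 * π * θ q / A with hb
  -- the RHS integrand
  set W : ℝ → ℝ := fun x =>
      ‖∑ n ∈ s, Complex.exp (2 * (π : ℂ) * Complex.I * ((x * φ₁ n / A : ℝ) : ℂ))‖ ^ 2 *
      ‖∑ n ∈ s, Complex.exp (2 * (π : ℂ) * Complex.I * ((x * φ₂ n / A : ℝ) : ℂ))‖ ^ 2 with hW
  -- pointwise expansion
  have hWx : ∀ x : ℝ, W x = ∑ q ∈ P, Real.cos (b q * x) := by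
    intro x
    have h1 : ∀ (φ : ℤ → ℝ) (n : ℤ),
        Complex.exp (2 * (π : ℂ) * Complex.I * ((x * φ n / A : ℝ) : ℂ))
        = Complex.exp (((2 * π * x / A * φ n : ℝ) : ℂ) * Complex.I) := by
      intro φ n
      congr 1
      push_cast
      have : (A : ℂ) ≠ 0 := by exact_mod_cast hA0.ne'
      field_simp
    have := expand s (2 * π * x / A) φ₁ φ₂
    rw [hW]
    simp only [h1]
    rw [← this]
    refine Finset.sum_congr rfl fun q _ => ?_
    rw [hb, hθ]
    congr 1
    field_simp
  -- each good quadruple contributes at least 2T/π²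
  have step1 : (Q.card : ℝ) * (2 * T / π ^ 2)
      ≤ ∑ q ∈ Q, ∫ x in (0:ℝ)..T, (1 - x / T) * Real.cos (b q * x) := by
    rw [← nsmul_eq_mul]
    apply Finset.card_nsmul_le_sum
    intro q hq
    apply g_ge T (b q) hT0
    have hθq : |θ q| ≤ (1 / X) * A := (Finset.mem_filter.mp hq).2
    have h2 : |θ q| * X ≤ A := by
      have h3 : |θ q| ≤ A / X := by rw [div_eq_inv_mul, ← one_div]; exact hθq
      exact (le_div_iff₀ hX).mp h3
    have h1 : |b q| = 2 * π * |θ q| / A := by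
      rw [hb, abs_div, abs_mul, abs_of_pos (by positivity : (0:ℝ) < 2 * π), abs_of_pos hA0]
    rw [h1, div_mul_eq_mul_div, div_le_iff₀ hA0]
    have h4 : 2 * π * |θ q| * T = π * (|θ q| * X) := by rw [hT]; ring
    rw [h4]
    exact mul_le_mul_of_nonneg_left h2 hπ.le
  -- drop to full sum
  have step2 : ∑ q ∈ Q, (∫ x in (0:ℝ)..T, (1 - x / T) * Real.cos (b q * x))
      ≤ ∑ q ∈ P, ∫ x in (0:ℝ)..T, (1 - x / T) * Real.cos (b q * x) := by
    apply Finset.sum_le_sum_of_subset_of_nonneg (Finset.filter_subset _ _)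
    intro q _ _
    exact g_nonneg T (b q) hT0
  -- swap sum and integral
  have step3 : ∑ q ∈ P, (∫ x in (0:ℝ)..T, (1 - x / T) * Real.cos (b q * x))
      = ∫ x in (0:ℝ)..T, (1 - x / T) * W x := by
    rw [← intervalIntegral.integral_finset_sum]
    · apply intervalIntegral.integral_congr
      intro x _
      simp only [hWx, Finset.mul_sum]
    · intro q _
      exact Continuous.intervalIntegrable
        ((continuous_const.sub (continuous_id.div_const T)).mul
          (Real.continuous_cos.comp (continuous_const.mul continuous_id))) _ _
  -- drop the weight
  have hWcont : Continuous W := by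
    apply Continuous.mul <;>
    · apply Continuous.pow
      apply Continuous.norm
      apply continuous_finset_sum
      intro n _
      exact Complex.continuous_exp.comp (continuous_const.mul
        (Complex.continuous_ofReal.comp ((continuous_id.mul continuous_const).div_const A)))
  have hW0 : ∀ x, 0 ≤ W x := fun x => by positivity
  have step4 : (∫ x in (0:ℝ)..T, (1 - x / T) * W x) ≤ ∫ x in (0:ℝ)..T, W x := by
    apply intervalIntegral.integral_mono_on hT0.le
    · exact Continuous.intervalIntegrable
        ((continuous_const.sub (continuous_id.div_const T)).mul hWcont) _ _
    · exact hWcont.intervalIntegrable _ _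
    · intro x hx
      have hx0 : 0 ≤ x := hx.1
      have : 1 - x / T ≤ 1 := by
        have : 0 ≤ x / T := by positivity
        linarith
      nlinarith [hW0 x]
  -- combine
  have main : (Q.card : ℝ) * (2 * T / π ^ 2) ≤ ∫ x in (0:ℝ)..T, W x := by
    calc (Q.card : ℝ) * (2 * T / π ^ 2)
        ≤ ∑ q ∈ Q, ∫ x in (0:ℝ)..T, (1 - x / T) * Real.cos (b q * x) := step1
      _ ≤ ∑ q ∈ P, ∫ x in (0:ℝ)..T, (1 - x / T) * Real.cos (b q * x) := step2
      _ = ∫ x in (0:ℝ)..T, (1 - x / T) * W x := step3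
      _ ≤ ∫ x in (0:ℝ)..T, W x := step4
  have hTX : 2 * T = X := by rw [hT]; ring
  have hfin : (Q.card : ℝ) ≤ π ^ 2 / X * ∫ x in (0:ℝ)..T, W x := by
    have hpx : 0 < π ^ 2 / X := by positivity
    have h5 : (Q.card : ℝ) = ((Q.card : ℝ) * (2 * T / π ^ 2)) * (π ^ 2 / X) := by
      rw [hTX]
      field_simp
    rw [h5, mul_comm (π ^ 2 / X) _]
    exact mul_le_mul_of_nonneg_right main hpx.le
  exact hfin
end

section
/- Let N ≥ 1 be an integer, k ≥ 1 a natural number, and z₁, …, z_N complex numbers. Define |∑ z_n|* = max over 1 ≤ N₁ ≤ N₂ ≤ N of |∑_{N₁ ≤ n ≤ N₂} z_n|, and let L(t) = min(N, 1/(2|t|)). Then (|∑_{n=1}^N z_n|*)^k ≤ (1 + log N)^{k-1} ∫_{-1/2}^{1/2} |∑_{n=1}^N z_n e(nt)|^k L(t) dt. -/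
open Real MeasureTheory

set_option maxHeartbeats 1000000

lemma orth (j : ℤ) (hj : j ≠ 0) :
    ∫ t in (-(1:ℝ)/2)..(1/2), Complex.exp (2*π*Complex.I*j*t) = 0 := by
  have hc : (2*π*Complex.I*j : ℂ) ≠ 0 := by
    simp [Complex.ext_iff, Real.pi_ne_zero, hj, Complex.I_ne_zero]
  have := integral_exp_mul_complex (a := (-(1:ℝ)/2)) (b := (1/2:ℝ)) (c := 2*π*Complex.I*j) hc
  rw [this]
  have h1 : Complex.exp (2*π*Complex.I*j * ((1:ℝ)/2:ℝ)) = Complex.exp (2*π*Complex.I*j * ((-1/2:ℝ):ℂ)) := by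
    rw [Complex.exp_eq_exp_iff_exists_int]
    exact ⟨j, by push_cast; ring⟩
  rw [div_eq_zero_iff]
  left
  rw [sub_eq_zero]
  convert h1 using 3

lemma contexp (c b : ℂ) : Continuous (fun t : ℝ => c * Complex.exp (b*t)) :=
  continuous_const.mul (Complex.continuous_exp.comp (continuous_const.mul Complex.continuous_ofReal))

lemma orth2 (n m : ℕ) :
    ∫ t in (-(1:ℝ)/2)..(1/2),
      Complex.exp (2*π*Complex.I*(((n:ℝ)*t:ℝ):ℂ)) * Complex.exp (-(2*π*Complex.I*(((m:ℝ)*t:ℝ):ℂ)))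
      = if n = m then 1 else 0 := by
  have key : ∀ t : ℝ, Complex.exp (2*π*Complex.I*(((n:ℝ)*t:ℝ):ℂ)) * Complex.exp (-(2*π*Complex.I*(((m:ℝ)*t:ℝ):ℂ)))
      = Complex.exp (2*π*Complex.I*(((n:ℤ)-(m:ℤ) : ℤ):ℂ)*t) := by
    intro t
    rw [← Complex.exp_add]
    congr 1
    push_cast
    ring
  simp_rw [key]
  by_cases h : n = m
  · subst h
    simp
    norm_num
  · rw [if_neg h, orth]
    intro hc
    apply h
    omega

lemma contexp' (c : ℂ) (a : ℕ) : Continuous (fun t : ℝ => c * Complex.exp (2*π*Complex.I*(((a:ℝ)*t:ℝ):ℂ))) := by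
  fun_prop

lemma stepA (N N₁ N₂ : ℕ) (h1 : 1 ≤ N₁) (h12 : N₁ ≤ N₂) (h2 : N₂ ≤ N) (z : ℕ → ℂ) :
    ∫ t in (-(1:ℝ)/2)..(1/2),
      (∑ n ∈ Finset.Icc 1 N, z n * Complex.exp (2*π*Complex.I*(((n:ℝ)*t:ℝ):ℂ))) *
      (∑ m ∈ Finset.Icc N₁ N₂, Complex.exp (-(2*π*Complex.I*(((m:ℝ)*t:ℝ):ℂ))))
      = ∑ n ∈ Finset.Icc N₁ N₂, z n := by
  have hint : ∀ (n m : ℕ), IntervalIntegrable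
      (fun t : ℝ => z n * (Complex.exp (2*π*Complex.I*(((n:ℝ)*t:ℝ):ℂ)) * Complex.exp (-(2*π*Complex.I*(((m:ℝ)*t:ℝ):ℂ)))))
      volume (-(1:ℝ)/2) (1/2) := by
    intro n m
    apply Continuous.intervalIntegrable
    fun_prop
  have expand : ∀ t : ℝ,
      (∑ n ∈ Finset.Icc 1 N, z n * Complex.exp (2*π*Complex.I*(((n:ℝ)*t:ℝ):ℂ))) *
      (∑ m ∈ Finset.Icc N₁ N₂, Complex.exp (-(2*π*Complex.I*(((m:ℝ)*t:ℝ):ℂ))))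
      = ∑ n ∈ Finset.Icc 1 N, ∑ m ∈ Finset.Icc N₁ N₂,
          z n * (Complex.exp (2*π*Complex.I*(((n:ℝ)*t:ℝ):ℂ)) * Complex.exp (-(2*π*Complex.I*(((m:ℝ)*t:ℝ):ℂ)))) := by
    intro t
    rw [Finset.sum_mul_sum]
    exact Finset.sum_congr rfl fun n _ => Finset.sum_congr rfl fun m _ => (mul_assoc _ _ _)
  rw [intervalIntegral.integral_congr (g := fun t => ∑ n ∈ Finset.Icc 1 N, ∑ m ∈ Finset.Icc N₁ N₂,
          z n * (Complex.exp (2*π*Complex.I*(((n:ℝ)*t:ℝ):ℂ)) * Complex.exp (-(2*π*Complex.I*(((m:ℝ)*t:ℝ):ℂ)))))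
      (fun t _ => expand t)]
  rw [intervalIntegral.integral_finset_sum (μ := volume)
      (f := fun n (t:ℝ) => ∑ m ∈ Finset.Icc N₁ N₂,
        z n * (Complex.exp (2*π*Complex.I*(((n:ℝ)*t:ℝ):ℂ)) * Complex.exp (-(2*π*Complex.I*(((m:ℝ)*t:ℝ):ℂ)))))
      (fun n _ => Continuous.intervalIntegrable (continuous_finset_sum _ (fun m _ => by fun_prop)) _ _)]
  have inner : ∀ n, n ∈ Finset.Icc 1 N →
      (∫ t in (-(1:ℝ)/2)..(1/2), ∑ m ∈ Finset.Icc N₁ N₂,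
        z n * (Complex.exp (2*π*Complex.I*(((n:ℝ)*t:ℝ):ℂ)) * Complex.exp (-(2*π*Complex.I*(((m:ℝ)*t:ℝ):ℂ)))))
      = ∑ m ∈ Finset.Icc N₁ N₂, (if n = m then z n else 0) := by
    intro n _
    rw [intervalIntegral.integral_finset_sum (μ := volume)
      (f := fun (m:ℕ) (t:ℝ) => z n * (Complex.exp (2*π*Complex.I*(((n:ℝ)*t:ℝ):ℂ)) * Complex.exp (-(2*π*Complex.I*(((m:ℝ)*t:ℝ):ℂ)))))
      (fun m _ => hint n m)]
    refine Finset.sum_congr rfl fun m _ => ?_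
    rw [intervalIntegral.integral_const_mul, orth2]
    split <;> simp
  rw [Finset.sum_congr rfl inner, Finset.sum_comm]
  refine Finset.sum_congr rfl fun m hm => ?_
  rw [Finset.sum_ite_eq' (Finset.Icc 1 N) m z, if_pos]
  simp only [Finset.mem_Icc] at hm ⊢
  omega

lemma norm_exp_sub_one (θ : ℝ) : ‖Complex.exp (θ*Complex.I) - 1‖ = 2*|Real.sin (θ/2)| := by
  have h1 : Complex.exp (θ*Complex.I) - 1 = Complex.ofReal (Real.cos θ - 1) + Complex.ofReal (Real.sin θ) * Complex.I := by
    rw [Complex.exp_mul_I]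
    push_cast
    ring
  rw [h1]
  rw [Complex.norm_def, Complex.normSq_add_mul_I]
  have hs := Real.sin_sq_add_cos_sq θ
  have hh : Real.sin (θ/2)^2 = 1/2 - Real.cos (2*(θ/2))/2 := Real.sin_sq_eq_half_sub (θ/2)
  rw [show 2*(θ/2) = θ by ring] at hh
  have : (Real.cos θ - 1)^2 + Real.sin θ^2 = (2*|Real.sin (θ/2)|)^2 := by
    rw [mul_pow, sq_abs]
    nlinarith
  rw [this, Real.sqrt_sq (by positivity)]

lemma kernel_bound (N N₁ N₂ : ℕ) (hN1 : 1 ≤ N₁) (h12 : N₁ ≤ N₂) (h2 : N₂ ≤ N)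
    (t : ℝ) (ht : |t| ≤ 1/2) (ht0 : t ≠ 0) :
    ‖∑ m ∈ Finset.Icc N₁ N₂, Complex.exp (-(2*π*Complex.I*(((m:ℝ)*t:ℝ):ℂ)))‖
      ≤ min (N:ℝ) (1/(2*|t|)) := by
  have hterm : ∀ m : ℕ, Complex.exp (-(2*π*Complex.I*(((m:ℝ)*t:ℝ):ℂ)))
      = Complex.exp ((-(2*π*t):ℝ)*Complex.I) ^ m := by
    intro m
    rw [← Complex.exp_nat_mul]
    congr 1
    push_cast
    ring
  set w : ℂ := Complex.exp ((-(2*π*t):ℝ)*Complex.I) with hw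
  have hwnorm : ∀ j : ℕ, ‖w ^ j‖ = 1 := by
    intro j
    rw [norm_pow, Complex.norm_exp]
    simp
  refine le_min ?_ ?_
  · calc ‖∑ m ∈ Finset.Icc N₁ N₂, Complex.exp (-(2*π*Complex.I*(((m:ℝ)*t:ℝ):ℂ)))‖
        ≤ ∑ m ∈ Finset.Icc N₁ N₂, ‖Complex.exp (-(2*π*Complex.I*(((m:ℝ)*t:ℝ):ℂ)))‖ :=
          norm_sum_le _ _
      _ = ∑ m ∈ Finset.Icc N₁ N₂, (1:ℝ) := by
          refine Finset.sum_congr rfl fun m _ => ?_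
          rw [hterm m, hwnorm]
      _ ≤ (N:ℝ) := by
          rw [Finset.sum_const, Nat.card_Icc, nsmul_eq_mul, mul_one]
          have : N₂ + 1 - N₁ ≤ N := by omega
          exact_mod_cast this
  · have hπ := Real.pi_pos
    have hw1 : w ≠ 1 := by
      rw [hw]
      intro hcontra
      rw [Complex.exp_eq_one_iff] at hcontra
      obtain ⟨n, hn⟩ := hcontra
      rw [show ((n:ℂ)*(2*π*Complex.I)) = (((n:ℝ)*(2*π):ℝ):ℂ)*Complex.I by push_cast; ring] at hn
      have h3 := mul_right_cancel₀ Complex.I_ne_zero hn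
      have h4 : (-(2*π*t) : ℝ) = (n:ℝ)*(2*π) := by exact_mod_cast h3
      have ht' : t = -(n:ℝ) := by
        have h5 : 2*π*(t + n) = 0 := by linarith
        have h6 : t + n = 0 := by
          rcases mul_eq_zero.mp h5 with h | h
          · linarith
          · exact h
        linarith
      have hn0 : n ≠ 0 := by
        rintro rfl
        simp at ht'
        exact ht0 ht'
      have : (1:ℝ) ≤ |t| := by
        rw [ht', abs_neg]
        rw [← Int.cast_abs]
        exact_mod_cast Int.one_le_abs hn0
      linarith
    have hsum : ∑ m ∈ Finset.Icc N₁ N₂, w ^ m = (w^(N₂+1) - w^N₁)/(w-1) := by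
      rw [← Finset.Ico_add_one_right_eq_Icc]
      exact geom_sum_Ico hw1 (by omega)
    have hnum : ‖w^(N₂+1) - w^N₁‖ ≤ 2 := by
      calc ‖w^(N₂+1) - w^N₁‖ ≤ ‖w^(N₂+1)‖ + ‖w^N₁‖ := norm_sub_le _ _
        _ = 2 := by rw [hwnorm, hwnorm]; norm_num
    have habspos : 0 < |t| := abs_pos.mpr ht0
    have hden : 4*|t| ≤ ‖w - 1‖ := by
      rw [hw, norm_exp_sub_one]
      have e1 : -(2*π*t)/2 = -(π*t) := by ring
      have h7 : |Real.sin (-(2*π*t)/2)| = Real.sin (π * |t|) := by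
        rw [e1, Real.sin_neg, abs_neg]
        rcases le_or_gt 0 t with h | h
        · have habs : |t| = t := abs_of_nonneg h
          rw [habs]
          exact abs_of_nonneg (Real.sin_nonneg_of_nonneg_of_le_pi (by positivity)
            (by nlinarith [habs ▸ ht]))
        · have habs : |t| = -t := abs_of_neg h
          rw [habs, show π * -t = -(π*t) by ring, Real.sin_neg]
          refine abs_of_nonpos ?_
          have h8 : -π ≤ π*t := by nlinarith [neg_abs_le t, habs ▸ ht]
          have h9 : π*t ≤ 0 := by nlinarith
          exact Real.sin_nonpos_of_nonpos_of_neg_pi_le h9 h8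
      rw [h7]
      have h10 : 2/π * (π*|t|) ≤ Real.sin (π*|t|) :=
        Real.mul_le_sin (by positivity) (by nlinarith)
      have h11 : 2/π * (π*|t|) = 2*|t| := by field_simp
      nlinarith
    calc ‖∑ m ∈ Finset.Icc N₁ N₂, Complex.exp (-(2*π*Complex.I*(((m:ℝ)*t:ℝ):ℂ)))‖
        = ‖(w^(N₂+1) - w^N₁)/(w-1)‖ := by
          rw [(Finset.sum_congr rfl fun m _ => hterm m).trans hsum]
      _ = ‖w^(N₂+1) - w^N₁‖ / ‖w-1‖ := norm_div _ _
      _ ≤ 2 / (4*|t|) := div_le_div₀ (by norm_num) hnum (by positivity) hden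
      _ = 1/(2*|t|) := by
          rw [show (4:ℝ)*|t| = 2*(2*|t|) by ring, ← div_div]
          norm_num

lemma L_intble (N : ℕ) (a b : ℝ) :
    IntervalIntegrable (fun t : ℝ => min (N:ℝ) (1/(2*|t|))) volume a b := by
  rw [intervalIntegrable_iff]
  apply MeasureTheory.Integrable.mono' (integrableOn_const (C:=(N:ℝ)) measure_Ioc_lt_top.ne)
  · exact ((measurable_const.min ((measurable_abs.const_mul 2).const_div 1)).aestronglyMeasurable)
  · filter_upwards with t
    rw [Real.norm_eq_abs, abs_of_nonneg (le_min (by positivity) (by positivity))]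
    exact min_le_left _ _

lemma intL (N : ℕ) (hN : 1 ≤ N) :
    ∫ t in (-(1:ℝ)/2)..(1/2), min (N:ℝ) (1/(2*|t|)) = 1 + Real.log N := by
  have hN1 : (1:ℝ) ≤ N := by exact_mod_cast hN
  have hNpos : (0:ℝ) < N := by linarith
  set a : ℝ := 1/(2*N) with ha
  have hapos : 0 < a := by positivity
  have ha2 : a ≤ 1/2 := by
    rw [ha, div_le_div_iff₀ (by positivity) (by norm_num)]
    nlinarith
  have hsplit : ∫ t in (-(1:ℝ)/2)..(1/2), min (N:ℝ) (1/(2*|t|))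
      = (∫ t in (-(1:ℝ)/2)..(-a), min (N:ℝ) (1/(2*|t|)))
      + (∫ t in (-a)..a, min (N:ℝ) (1/(2*|t|)))
      + (∫ t in a..(1/2:ℝ), min (N:ℝ) (1/(2*|t|))) := by
    rw [intervalIntegral.integral_add_adjacent_intervals (L_intble N _ _) (L_intble N _ _),
        intervalIntegral.integral_add_adjacent_intervals (L_intble N _ _) (L_intble N _ _)]
  have hmid : (∫ t in (-a)..a, min (N:ℝ) (1/(2*|t|))) = 1 := by
    have hcong : (∫ t in (-a)..a, min (N:ℝ) (1/(2*|t|))) = ∫ t in (-a)..a, (N:ℝ) := by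
      apply intervalIntegral.integral_congr_ae
      filter_upwards [compl_mem_ae_iff.mpr (measure_singleton (0:ℝ))] with t ht htI
      simp only [Set.mem_compl_iff, Set.mem_singleton_iff] at ht
      rw [Set.uIoc_of_le (by linarith)] at htI
      have h1 : |t| ≤ a := abs_le.mpr ⟨le_of_lt htI.1, htI.2⟩
      have h2 : 0 < |t| := abs_pos.mpr ht
      rw [min_eq_left]
      rw [ha] at h1
      rw [le_div_iff₀ (by positivity)]
      calc (N:ℝ) * (2*|t|) ≤ (N:ℝ) * (2 * (1/(2*N))) := by
            apply mul_le_mul_of_nonneg_left _ (by positivity)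
            linarith
        _ = 1 := by field_simp
    rw [hcong, intervalIntegral.integral_const, smul_eq_mul, ha]
    have h9 : (1/(2*(N:ℝ)) - -(1/(2*N))) = 1/N := by ring
    rw [h9, one_div_mul_cancel (ne_of_gt hNpos)]
  have hright : (∫ t in a..(1/2:ℝ), min (N:ℝ) (1/(2*|t|))) = (1/2) * Real.log N := by
    have hcong : (∫ t in a..(1/2:ℝ), min (N:ℝ) (1/(2*|t|))) = ∫ t in a..(1/2:ℝ), (1/2) * (1/t) := by
      apply intervalIntegral.integral_congr
      intro t htI
      rw [Set.uIcc_of_le (by linarith)] at htI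
      have h0 : 0 < t := lt_of_lt_of_le hapos htI.1
      show min (N:ℝ) (1/(2*|t|)) = 1/2 * (1/t)
      rw [abs_of_pos h0, min_eq_right]
      · ring
      · rw [div_le_iff₀ (by positivity)]
        have h3 : a ≤ t := htI.1
        rw [ha, div_le_iff₀ (by positivity)] at h3
        nlinarith
    rw [hcong, intervalIntegral.integral_const_mul]
    have h0 : (0:ℝ) ∉ Set.uIcc a (1/2:ℝ) := by
      rw [Set.uIcc_of_le (by linarith)]
      intro h
      exact absurd h.1 (by linarith)
    rw [integral_one_div h0]
    have h8 : (1/2:ℝ)/a = N := by rw [ha]; field_simp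
    rw [h8]
  have hleft : (∫ t in (-(1:ℝ)/2)..(-a), min (N:ℝ) (1/(2*|t|))) = (1/2) * Real.log N := by
    have hcong : (∫ t in (-(1:ℝ)/2)..(-a), min (N:ℝ) (1/(2*|t|)))
        = ∫ t in (-(1:ℝ)/2)..(-a), (-(1/2)) * (1/t) := by
      apply intervalIntegral.integral_congr
      intro t htI
      rw [Set.uIcc_of_le (by linarith)] at htI
      have h0 : t < 0 := lt_of_le_of_lt htI.2 (by linarith)
      show min (N:ℝ) (1/(2*|t|)) = -(1/2) * (1/t)
      rw [abs_of_neg h0, min_eq_right]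
      · field_simp
      · rw [div_le_iff₀ (by nlinarith)]
        have h3 : t ≤ -a := htI.2
        have h4 : a ≤ -t := by linarith
        rw [ha, div_le_iff₀ (by positivity)] at h4
        nlinarith
    rw [hcong, intervalIntegral.integral_const_mul]
    have h0 : (0:ℝ) ∉ Set.uIcc (-(1:ℝ)/2) (-a) := by
      rw [Set.uIcc_of_le (by linarith)]
      intro h
      exact absurd h.2 (by linarith)
    rw [integral_one_div h0]
    have h8 : (-a)/(-(1:ℝ)/2) = 1/N := by rw [ha]; field_simp
    rw [h8, show (1:ℝ)/(N:ℝ) = ((N:ℝ))⁻¹ from one_div _, Real.log_inv]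
    ring
  rw [hsplit, hleft, hmid, hright]
  ring

theorem stmt_5 (N : ℕ) (hN : 1 ≤ N) (k : ℕ) (hk : 1 ≤ k) (z : ℕ → ℂ)
    (N₁ N₂ : ℕ) (h1 : 1 ≤ N₁) (h12 : N₁ ≤ N₂) (h2 : N₂ ≤ N) :
    ‖∑ n ∈ Finset.Icc N₁ N₂, z n‖ ^ k
      ≤ (1 + Real.log N) ^ (k - 1) *
        ∫ t in (-(1:ℝ)/2)..(1/2),
          ‖∑ n ∈ Finset.Icc 1 N, z n *
              Complex.exp (2 * (π : ℂ) * Complex.I * (((n : ℝ) * t : ℝ) : ℂ))‖ ^ k *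
            min (N : ℝ) (1 / (2 * |t|)) := by
  set S : ℝ → ℂ := fun t => ∑ n ∈ Finset.Icc 1 N, z n * Complex.exp (2*(π:ℂ)*Complex.I*(((n:ℝ)*t:ℝ):ℂ)) with hS
  set D : ℝ → ℂ := fun t => ∑ m ∈ Finset.Icc N₁ N₂, Complex.exp (-(2*(π:ℂ)*Complex.I*(((m:ℝ)*t:ℝ):ℂ))) with hD
  set L : ℝ → ℝ := fun t => min (N:ℝ) (1/(2*|t|)) with hL
  set f : ℝ → ℝ := fun t => ‖S t‖ with hf
  set C : ℝ := ∑ n ∈ Finset.Icc 1 N, ‖z n‖ with hC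
  have hCnn : 0 ≤ C := Finset.sum_nonneg fun _ _ => norm_nonneg _
  have hfC : ∀ t, f t ≤ C := by
    intro t
    refine (norm_sum_le _ _).trans (Finset.sum_le_sum fun n _ => ?_)
    rw [norm_mul]
    have he : ‖Complex.exp (2*(π:ℂ)*Complex.I*(((n:ℝ)*t:ℝ):ℂ))‖ = 1 := by
      rw [show (2*(π:ℂ)*Complex.I*(((n:ℝ)*t:ℝ):ℂ)) = (((2*π*((n:ℝ)*t)):ℝ):ℂ)*Complex.I by push_cast; ring]
      rw [Complex.norm_exp_ofReal_mul_I]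
    rw [he, mul_one]
  have hLnn : ∀ t, 0 ≤ L t := fun t => le_min (by positivity) (by positivity)
  have hLleN : ∀ t, L t ≤ (N:ℝ) := fun t => min_le_left _ _
  have hLmeas : Measurable L := measurable_const.min ((measurable_abs.const_mul 2).const_div 1)
  have hScont : Continuous S := continuous_finset_sum _ (fun n _ => by fun_prop)
  have hfcont : Continuous f := hScont.norm
  have hfnn : ∀ t, 0 ≤ f t := fun t => norm_nonneg _
  -- integrability of f * L on the interval
  have hfL_intble : IntervalIntegrable (fun t => f t * L t) volume (-(1:ℝ)/2) (1/2) := by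
    rw [intervalIntegrable_iff]
    apply MeasureTheory.Integrable.mono'
      (integrableOn_const (C:=C*(N:ℝ)) measure_Ioc_lt_top.ne)
    · exact (hfcont.aestronglyMeasurable.mul hLmeas.aestronglyMeasurable)
    · filter_upwards with t
      rw [Real.norm_eq_abs, abs_of_nonneg (mul_nonneg (hfnn t) (hLnn t))]
      exact mul_le_mul (hfC t) (hLleN t) (hLnn t) hCnn
  have hSD_intble : IntervalIntegrable (fun t => S t * D t) volume (-(1:ℝ)/2) (1/2) := by
    apply Continuous.intervalIntegrable
    exact hScont.mul (continuous_finset_sum _ (fun m _ => by fun_prop))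
  -- Step B
  have hB : ‖∑ n ∈ Finset.Icc N₁ N₂, z n‖ ≤ ∫ t in (-(1:ℝ)/2)..(1/2), f t * L t := by
    rw [← stepA N N₁ N₂ h1 h12 h2 z]
    refine le_trans (intervalIntegral.norm_integral_le_integral_norm (by norm_num)) ?_
    apply intervalIntegral.integral_mono_ae_restrict (by norm_num : (-(1:ℝ)/2) ≤ 1/2)
      (hSD_intble.norm) hfL_intble
    have h0 : ∀ᵐ t ∂(volume.restrict (Set.Icc (-(1:ℝ)/2) (1/2))), t ≠ 0 := by
      apply ae_restrict_of_ae
      filter_upwards [compl_mem_ae_iff.mpr (measure_singleton (0:ℝ))] with t ht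
      simpa using ht
    filter_upwards [h0, ae_restrict_mem measurableSet_Icc] with t ht htI
    rw [norm_mul]
    have habs : |t| ≤ 1/2 := abs_le.mpr ⟨by linarith [htI.1], htI.2⟩
    exact mul_le_mul_of_nonneg_left (kernel_bound N N₁ N₂ h1 h12 h2 t habs ht) (hfnn t)
  -- measure with density L
  set Lnn : ℝ → NNReal := fun t => Real.toNNReal (L t) with hLnnDef
  have hLnnMeas : Measurable Lnn := hLmeas.real_toNNReal
  set μ : Measure ℝ := (volume.restrict (Set.Ioc (-(1:ℝ)/2) (1/2))).withDensity
      (fun t => (Lnn t : ENNReal)) with hμ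
  have hcoe : ∀ t, ((Lnn t : ℝ)) = L t := fun t => Real.coe_toNNReal _ (hLnn t)
  haveI hfin : IsFiniteMeasure μ := by
    constructor
    rw [hμ, withDensity_apply _ MeasurableSet.univ, Measure.restrict_univ]
    calc ∫⁻ t, (Lnn t : ENNReal) ∂(volume.restrict (Set.Ioc (-(1:ℝ)/2) (1/2)))
        ≤ ∫⁻ _, ENNReal.ofReal (N:ℝ) ∂(volume.restrict (Set.Ioc (-(1:ℝ)/2) (1/2))) :=
          lintegral_mono (fun t => ENNReal.ofReal_le_ofReal (hLleN t))
      _ = ENNReal.ofReal (N:ℝ) * volume (Set.Ioc (-(1:ℝ)/2) (1/2)) := by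
          rw [lintegral_const, Measure.restrict_apply_univ]
      _ < ⊤ := ENNReal.mul_lt_top ENNReal.ofReal_lt_top measure_Ioc_lt_top
  have hint_conv : ∀ g : ℝ → ℝ, ∫ t, g t ∂μ = ∫ t in Set.Ioc (-(1:ℝ)/2) (1/2), L t * g t := by
    intro g
    rw [hμ, integral_withDensity_eq_integral_smul hLnnMeas g]
    apply setIntegral_congr_fun measurableSet_Ioc
    intro t _
    show Lnn t • g t = L t * g t
    rw [NNReal.smul_def, smul_eq_mul, hcoe]
  set M : ℝ := 1 + Real.log N with hM
  have hM1 : 1 ≤ M := by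
    have := Real.log_nonneg (by exact_mod_cast hN : (1:ℝ) ≤ N)
    linarith
  have hMpos : 0 < M := by linarith
  have hIoc : ∀ g : ℝ → ℝ, (∫ t in (-(1:ℝ)/2)..(1/2), g t) = ∫ t in Set.Ioc (-(1:ℝ)/2) (1/2), g t :=
    fun g => intervalIntegral.integral_of_le (by norm_num)
  have hμuniv : (μ Set.univ).toReal = M := by
    have h := hint_conv (fun _ => (1:ℝ))
    rw [integral_const, smul_eq_mul, mul_one] at h
    rw [show (μ Set.univ).toReal = μ.real Set.univ from rfl, h]
    simp_rw [mul_one]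
    rw [← hIoc L, hL, intL N hN, hM]
  haveI : NeZero μ := by
    constructor
    intro h
    rw [h] at hμuniv
    simp at hμuniv
    linarith
  -- Jensen
  have hfi : Integrable f μ := by
    apply MeasureTheory.Integrable.mono' (integrable_const C) hfcont.aestronglyMeasurable
    filter_upwards with t
    rw [Real.norm_eq_abs, abs_of_nonneg (hfnn t)]
    exact hfC t
  have hgi : Integrable (fun t => (f t)^k) μ := by
    apply MeasureTheory.Integrable.mono' (integrable_const (C^k))
      ((hfcont.pow k).aestronglyMeasurable)
    filter_upwards with t
    rw [Real.norm_eq_abs, Pi.pow_apply, abs_of_nonneg (pow_nonneg (hfnn t) k)]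
    exact pow_le_pow_left₀ (hfnn t) (hfC t) k
  have hJ := (convexOn_pow k).map_average_le (continuous_pow k).continuousOn isClosed_Ici
    (ae_of_all _ (fun t => hfnn t)) hfi hgi
  rw [average_eq, average_eq, show μ.real Set.univ = M from hμuniv, smul_eq_mul, smul_eq_mul] at hJ
  set A : ℝ := ∫ t, f t ∂μ with hA
  set B : ℝ := ∫ t, (f t)^k ∂μ with hB2
  have hJ' : (M⁻¹ * A)^k ≤ M⁻¹ * B := hJ
  -- identify A and B
  have hAeq : A = ∫ t in (-(1:ℝ)/2)..(1/2), f t * L t := by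
    rw [hA, hint_conv f, ← hIoc (fun t => L t * f t)]
    apply intervalIntegral.integral_congr
    intro t _
    exact mul_comm (L t) (f t)
  have hBeq : B = ∫ t in (-(1:ℝ)/2)..(1/2), (f t)^k * L t := by
    rw [hB2, hint_conv (fun t => (f t)^k), ← hIoc (fun t => L t * (f t)^k)]
    apply intervalIntegral.integral_congr
    intro t _
    exact mul_comm (L t) ((f t)^k)
  have hAnn : 0 ≤ A := le_trans (norm_nonneg _) (hAeq ▸ hB)
  have hfinal : A^k ≤ M^(k-1) * B := by
    have hMne : M ≠ 0 := ne_of_gt hMpos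
    have hMk : (0:ℝ) ≤ M^k := by positivity
    have h' := mul_le_mul_of_nonneg_left hJ' hMk
    have e1 : M^k * (M⁻¹ * A)^k = A^k := by
      rw [mul_pow, ← mul_assoc, ← mul_pow, mul_inv_cancel₀ hMne, one_pow, one_mul]
    have e2 : M^k * (M⁻¹ * B) = M^(k-1) * B := by
      have e3 : M^k = M^(k-1) * M := by
        rw [← pow_succ]
        congr 1
        omega
      rw [e3]
      field_simp
    rw [e1, e2] at h'
    exact h'
  calc ‖∑ n ∈ Finset.Icc N₁ N₂, z n‖ ^ k ≤ A^k := by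
        rw [hAeq]
        exact pow_le_pow_left₀ (norm_nonneg _) hB k
    _ ≤ M^(k-1) * B := hfinal
    _ = M^(k-1) * ∫ t in (-(1:ℝ)/2)..(1/2), (f t)^k * L t := by rw [hBeq]
end

section
/- Let r(m) denote the number of representations of the nonnegative integer m as a sum of two squares of integers (counted with signs and order). For real β with 0 < β < N and integer N ≥ 2, ∑_{0 ≤ l ≤ 3β} ∑_{m ≤ 8N²} r(m) r(m+l) ≪ N² log N + (1+β) log(2+β) N², where l ranges over nonnegative integers. -/
open Finset



lemma toNat_cast_real (a : ℤ) (ha : 0 ≤ a) : ((a.toNat : ℝ)) = (a : ℝ) := by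
  rw [← Int.cast_natCast, Int.toNat_of_nonneg ha]

lemma card_Icc_int (Y : ℤ) (hY : 0 ≤ Y) : (((Finset.Icc (-Y) Y).card : ℝ)) = 2*Y + 1 := by
  rw [Int.card_Icc]
  have h : Y + 1 - (-Y) = 2*Y + 1 := by ring
  rw [h, toNat_cast_real _ (by linarith)]
  push_cast; ring

lemma harmonic_sum (n : ℕ) : ∑ d ∈ Finset.Icc 1 n, (d : ℝ)⁻¹ ≤ 1 + Real.log n := by
  have := harmonic_le_one_add_log n
  rw [harmonic_eq_sum_Icc] at this
  calc ∑ d ∈ Finset.Icc 1 n, (d : ℝ)⁻¹ = ((∑ d ∈ Finset.Icc 1 n, (d:ℚ)⁻¹ : ℚ) : ℝ) := by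
        push_cast; rfl
    _ ≤ 1 + Real.log n := this



lemma cnt_core (Y s t l : ℤ) (hY : 1 ≤ Y) (ht : t ≠ 0) (hst : |s| ≤ |t|) :
    ((((Finset.Icc (-Y) Y) ×ˢ (Finset.Icc (-Y) Y)).filter
      (fun w : ℤ × ℤ => s * w.1 + t * w.2 = l)).card : ℝ)
    ≤ if (Int.gcd s t : ℤ) ∣ l then
        4*Y*(Int.gcd s t : ℝ)/(((max |s| |t| : ℤ) : ℝ)) + 1 else 0 := by
  set F := (((Finset.Icc (-Y) Y) ×ˢ (Finset.Icc (-Y) Y)).filter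
      (fun w : ℤ × ℤ => s * w.1 + t * w.2 = l)) with hF
  have hmax : max |s| |t| = |t| := max_eq_right hst
  have htpos : (0:ℤ) < |t| := abs_pos.mpr ht
  have hgN : 0 < Int.gcd s t := Int.gcd_pos_iff.mpr (Or.inr ht)
  have hgpos : (0:ℤ) < (Int.gcd s t : ℤ) := by exact_mod_cast hgN
  have hbpos : (0:ℝ) ≤ 4*Y*(Int.gcd s t : ℝ)/(((max |s| |t| : ℤ) : ℝ)) + 1 := by
    rw [hmax]
    have h1 : (0:ℝ) < ((|t| : ℤ) : ℝ) := by exact_mod_cast htpos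
    have h2 : (0:ℝ) ≤ (Int.gcd s t : ℝ) := by positivity
    positivity
  rcases F.eq_empty_or_nonempty with hE | ⟨w₀, hw₀⟩
  · rw [hE]
    simp only [card_empty, Nat.cast_zero]
    split_ifs
    · exact hbpos
    · exact le_refl 0
  · rw [mem_filter, mem_product] at hw₀
    obtain ⟨⟨hw₀1, hw₀2⟩, hw₀e⟩ := hw₀
    set g : ℤ := (Int.gcd s t : ℤ) with hgdef
    have hdl : g ∣ l := by
      rw [← hw₀e]
      exact dvd_add (Dvd.dvd.mul_right (Int.gcd_dvd_left _ _) _)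
        (Dvd.dvd.mul_right (Int.gcd_dvd_right _ _) _)
    rw [if_pos hdl, hmax]
    have hgt : g ∣ |t| := (dvd_abs _ _).mpr (Int.gcd_dvd_right _ _)
    set q : ℤ := |t| / g with hqdef
    have hqg : q * g = |t| := Int.ediv_mul_cancel hgt
    have hqpos : (0:ℤ) < q := by nlinarith
    -- key divisibility
    have hkey : ∀ w ∈ F, q ∣ (w.1 - w₀.1) := by
      intro w hw
      rw [hF, mem_filter] at hw
      obtain ⟨-, hwe⟩ := hw
      set s' : ℤ := s / g with hs'def
      set t' : ℤ := t / g with ht'def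
      have hs : g * s' = s := Int.mul_ediv_cancel' (Int.gcd_dvd_left _ _)
      have htt : g * t' = t := Int.mul_ediv_cancel' (Int.gcd_dvd_right _ _)
      have hco : Int.gcd s' t' = 1 :=
        Int.gcd_div_gcd_div_gcd hgN
      have h1 : s * (w.1 - w₀.1) = t * (w₀.2 - w.2) := by
        linear_combination hwe - hw₀e
      have h2 : s' * (w.1 - w₀.1) = t' * (w₀.2 - w.2) := by
        apply mul_left_cancel₀ (show g ≠ 0 from ne_of_gt hgpos)
        linear_combination h1 + (w.1 - w₀.1) * hs - (w₀.2 - w.2) * htt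
      have hd : t' ∣ s' * (w.1 - w₀.1) := h2 ▸ dvd_mul_right t' _
      have hcop : IsCoprime (t' : ℤ) s' := by
        rw [Int.isCoprime_iff_gcd_eq_one, Int.gcd_comm]
        exact hco
      have ht'd : t' ∣ (w.1 - w₀.1) := hcop.dvd_of_dvd_mul_left hd
      have hq' : q = |t'| := by
        have habs : |t| = g * |t'| := by
          rw [← htt, abs_mul, abs_of_pos hgpos]
        rw [hqdef, habs, Int.mul_ediv_cancel_left _ (ne_of_gt hgpos)]
      rw [hq']
      exact (abs_dvd _ _).mpr ht'd
    -- injection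
    set A : ℤ := 2*Y / q with hAdef
    have hinj : F.card ≤ (Finset.Icc (-A) A).card := by
      apply Finset.card_le_card_of_injOn (fun w => (w.1 - w₀.1) / q)
      · intro w hw
        have hdvd := hkey w hw
        rw [Finset.mem_coe, hF, mem_filter, mem_product] at hw
        obtain ⟨⟨hw1, hw2⟩, hwe⟩ := hw
        have hk : (w.1 - w₀.1) / q * q = w.1 - w₀.1 := Int.ediv_mul_cancel hdvd
        rw [mem_Icc] at hw1 hw₀1
        have habs : |w.1 - w₀.1| ≤ 2*Y := by
          rw [abs_le]; omega
        have hkabs : |(w.1 - w₀.1) / q| * q ≤ 2*Y := by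
          calc |(w.1 - w₀.1) / q| * q = |(w.1 - w₀.1) / q| * |q| := by
                rw [abs_of_pos hqpos]
            _ = |(w.1 - w₀.1) / q * q| := (abs_mul _ _).symm
            _ = |w.1 - w₀.1| := by rw [hk]
            _ ≤ 2*Y := habs
        have : |(w.1 - w₀.1) / q| ≤ A := by
          rw [hAdef, Int.le_ediv_iff_mul_le hqpos]
          exact hkabs
        rw [Finset.mem_coe, mem_Icc]
        exact abs_le.mp this
      · intro w hw w' hw' heq
        rw [Finset.mem_coe] at hw hw'
        simp only at heq
        have h1 : w.1 - w₀.1 = (w.1 - w₀.1) / q * q := (Int.ediv_mul_cancel (hkey w hw)).symm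
        have h2 : w'.1 - w₀.1 = (w'.1 - w₀.1) / q * q := (Int.ediv_mul_cancel (hkey w' hw')).symm
        have hfst : w.1 = w'.1 := by rw [heq] at h1; omega
        rw [hF, mem_filter] at hw hw'
        have hwE := hw.2
        have hw'E := hw'.2
        rw [hfst] at hwE
        have hsnd : w.2 = w'.2 := by
          apply mul_left_cancel₀ ht
          linarith
        exact Prod.ext hfst hsnd
    -- numeric finish
    have hA0 : (0:ℤ) ≤ A := Int.ediv_nonneg (by linarith) hqpos.le
    have hcard : ((Finset.Icc (-A) A).card : ℝ) = 2*A + 1 := by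
      rw [Int.card_Icc]
      have h : A + 1 - (-A) = 2*A + 1 := by ring
      rw [h, ← Int.cast_natCast, Int.toNat_of_nonneg (by linarith)]
      push_cast; ring
    have hAq : (A:ℝ) * q ≤ 2*Y := by
      exact_mod_cast Int.ediv_mul_le (2*Y) (ne_of_gt hqpos)
    have hqR : (0:ℝ) < (q:ℝ) := by exact_mod_cast hqpos
    have hgR : (0:ℝ) < (g:ℝ) := by exact_mod_cast hgpos
    have htR : (0:ℝ) < ((|t| : ℤ):ℝ) := by exact_mod_cast htpos
    have hqgR : (q:ℝ) * (g:ℝ) = ((|t| : ℤ):ℝ) := by exact_mod_cast hqg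
    have hdiv : 4*Y*(Int.gcd s t : ℝ)/(((|t| : ℤ) : ℝ)) = 4*(Y:ℝ)/(q:ℝ) := by
      rw [← hqgR]
      have : (Int.gcd s t : ℝ) = (g:ℝ) := by rw [hgdef]; push_cast; rfl
      rw [this]
      field_simp
    rw [hdiv]
    have hle : (F.card : ℝ) ≤ 2*A + 1 := by
      rw [← hcard]; exact_mod_cast hinj
    have hAle : (A:ℝ) ≤ 2*Y/(q:ℝ) := by
      rw [le_div_iff₀ hqR]; exact hAq
    have hYR : (1:ℝ) ≤ (Y:ℝ) := by exact_mod_cast hY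
    calc (F.card : ℝ) ≤ 2*A + 1 := hle
      _ ≤ 2*(2*Y/(q:ℝ)) + 1 := by linarith
      _ = 4*(Y:ℝ)/(q:ℝ) + 1 := by ring



lemma cnt_swap (Y s t l : ℤ) :
    (((Finset.Icc (-Y) Y ×ˢ Finset.Icc (-Y) Y).filter
      (fun w : ℤ × ℤ => s * w.1 + t * w.2 = l)).card)
    = (((Finset.Icc (-Y) Y ×ˢ Finset.Icc (-Y) Y).filter
      (fun w : ℤ × ℤ => t * w.1 + s * w.2 = l)).card) := by
  apply Finset.card_bij' (fun w _ => Prod.swap w) (fun w _ => Prod.swap w)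
  · intro w hw
    rw [mem_filter, mem_product] at hw ⊢
    exact ⟨⟨hw.1.2, hw.1.1⟩, by have := hw.2; simp only [Prod.fst_swap, Prod.snd_swap]; linarith⟩
  · intro w hw
    rw [mem_filter, mem_product] at hw ⊢
    exact ⟨⟨hw.1.2, hw.1.1⟩, by have := hw.2; simp only [Prod.fst_swap, Prod.snd_swap]; linarith⟩
  · intro w _; exact Prod.swap_swap w
  · intro w _; exact Prod.swap_swap w

lemma cnt_bound (Y : ℤ) (hY : 1 ≤ Y) (p : ℤ × ℤ) (hp : p ≠ (0, 0)) (l : ℤ) :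
    (((Finset.Icc (-Y) Y ×ˢ Finset.Icc (-Y) Y).filter
      (fun w : ℤ × ℤ => p.1 * w.1 + p.2 * w.2 = l)).card : ℝ)
    ≤ if (Int.gcd p.1 p.2 : ℤ) ∣ l then
        4*Y*(Int.gcd p.1 p.2 : ℝ)/(((max |p.1| |p.2| : ℤ) : ℝ)) + 1 else 0 := by
  obtain ⟨s, t⟩ := p
  simp only at *
  by_cases h : |s| ≤ |t|
  · have ht : t ≠ 0 := by
      intro h0
      apply hp
      rw [h0] at h
      simp only [abs_zero, abs_nonpos_iff] at h
      rw [h, h0]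
    exact cnt_core Y s t l hY ht h
  · push_neg at h
    have hs : s ≠ 0 := by
      intro h0; rw [h0] at h; simp only [abs_zero] at h
      exact absurd h (not_lt.mpr (abs_nonneg t))
    rw [cnt_swap]
    have := cnt_core Y t s l hY hs h.le
    rwa [Int.gcd_comm t s, max_comm |t| |s|] at this





lemma sum_inv_max (Z : ℤ) (hZ : 0 ≤ Z) :
    ∑ p ∈ ((Finset.Icc (-Z) Z ×ˢ Finset.Icc (-Z) Z).erase (0,0)),
      (1:ℝ) / (((max |p.1| |p.2| : ℤ)):ℝ) ≤ 12 * Z := by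
  set E := ((Finset.Icc (-Z) Z ×ˢ Finset.Icc (-Z) Z).erase ((0:ℤ),(0:ℤ))) with hE
  have hmap : ∀ p ∈ E, max |p.1| |p.2| ∈ Finset.Icc (1:ℤ) Z := by
    intro p hp
    rw [hE, mem_erase, mem_product, mem_Icc, mem_Icc] at hp
    obtain ⟨hne, ⟨h1, h2⟩⟩ := hp
    rw [mem_Icc]
    constructor
    · by_contra hlt
      push_neg at hlt
      have ha : |p.1| ≤ 0 := le_trans (le_max_left |p.1| |p.2|) (by omega)
      have h1' : p.1 = 0 := by rwa [abs_nonpos_iff] at ha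
      have hb : |p.2| ≤ 0 := le_trans (le_max_right |p.1| |p.2|) (by omega)
      have h2' : p.2 = 0 := by rwa [abs_nonpos_iff] at hb
      exact hne (Prod.ext h1' h2')
    · apply max_le <;> rw [abs_le] <;> omega
  rw [← Finset.sum_fiberwise_of_maps_to hmap]
  have hinner : ∀ k ∈ Finset.Icc (1:ℤ) Z,
      ∑ p ∈ E.filter (fun p => max |p.1| |p.2| = k), (1:ℝ) / (((max |p.1| |p.2| : ℤ)):ℝ)
      ≤ 12 := by
    intro k hk
    rw [mem_Icc] at hk
    have hk1 : (1:ℤ) ≤ k := hk.1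
    have hkR : (0:ℝ) < (k:ℝ) := by exact_mod_cast lt_of_lt_of_le (by norm_num) hk1
    have hsub : E.filter (fun p => max |p.1| |p.2| = k) ⊆
        (({-k, k} : Finset ℤ) ×ˢ Finset.Icc (-k) k) ∪
        (Finset.Icc (-k) k ×ˢ ({-k, k} : Finset ℤ)) := by
      intro p hp
      rw [mem_filter] at hp
      obtain ⟨-, hmx⟩ := hp
      have ha1 : |p.1| ≤ k := hmx ▸ le_max_left _ _
      have ha2 : |p.2| ≤ k := hmx ▸ le_max_right _ _
      rw [mem_union, mem_product, mem_product]
      rcases max_choice |p.1| |p.2| with hc | hc <;> rw [hc] at hmx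
      · left
        refine ⟨?_, mem_Icc.mpr (abs_le.mp ha2)⟩
        rcases (abs_eq (by omega : (0:ℤ) ≤ k)).mp hmx with h | h <;> simp [h]
      · right
        refine ⟨mem_Icc.mpr (abs_le.mp ha1), ?_⟩
        rcases (abs_eq (by omega : (0:ℤ) ≤ k)).mp hmx with h | h <;> simp [h]
    have hpair : (({-k, k} : Finset ℤ).card) ≤ 2 := by
      apply le_trans (Finset.card_insert_le _ _)
      simp
    have hcardN : (E.filter (fun p => max |p.1| |p.2| = k)).card ≤ 4 * (2*k+1).toNat := by
      apply le_trans (Finset.card_le_card hsub)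
      apply le_trans (Finset.card_union_le _ _)
      rw [Finset.card_product, Finset.card_product, Int.card_Icc]
      have h : k + 1 - (-k) = 2*k+1 := by ring
      rw [h]
      set c := (2*k+1).toNat
      calc ({-k, k} : Finset ℤ).card * c + c * ({-k, k} : Finset ℤ).card
          ≤ 2 * c + c * 2 := by
            exact Nat.add_le_add (Nat.mul_le_mul_right c hpair) (Nat.mul_le_mul_left c hpair)
        _ = 4 * c := by ring
    have hcard : ((E.filter (fun p => max |p.1| |p.2| = k)).card : ℝ) ≤ 12 * k := by
      calc ((E.filter (fun p => max |p.1| |p.2| = k)).card : ℝ)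
          ≤ (4 * (2*k+1).toNat : ℕ) := by exact_mod_cast hcardN
        _ = 4 * (2*(k:ℝ)+1) := by
            push_cast [toNat_cast_real (2*k+1) (by omega)]
            ring
        _ ≤ 12 * k := by
            have : (1:ℝ) ≤ (k:ℝ) := by exact_mod_cast hk1
            nlinarith
    calc ∑ p ∈ E.filter (fun p => max |p.1| |p.2| = k),
          (1:ℝ) / (((max |p.1| |p.2| : ℤ)):ℝ)
        = ∑ p ∈ E.filter (fun p => max |p.1| |p.2| = k), (1:ℝ)/(k:ℝ) := by
          apply Finset.sum_congr rfl
          intro p hp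
          rw [(mem_filter.mp hp).2]
      _ = ((E.filter (fun p => max |p.1| |p.2| = k)).card : ℝ) * (1/(k:ℝ)) := by
          rw [Finset.sum_const, nsmul_eq_mul]
      _ ≤ (12*k) * (1/(k:ℝ)) := by
          apply mul_le_mul_of_nonneg_right hcard
          positivity
      _ = 12 := by field_simp
  calc ∑ k ∈ Finset.Icc (1:ℤ) Z, ∑ p ∈ E.filter (fun p => max |p.1| |p.2| = k),
        (1:ℝ) / (((max |p.1| |p.2| : ℤ)):ℝ)
      ≤ ∑ k ∈ Finset.Icc (1:ℤ) Z, (12:ℝ) := Finset.sum_le_sum hinner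
    _ = ((Finset.Icc (1:ℤ) Z).card : ℝ) * 12 := by rw [Finset.sum_const, nsmul_eq_mul]
    _ ≤ 12 * Z := by
        rw [Int.card_Icc]
        have h : Z + 1 - 1 = Z := by ring
        rw [h, toNat_cast_real _ hZ]
        linarith





lemma sum_gcd_max (Y : ℤ) (hY : 1 ≤ Y) :
    ∑ p ∈ ((Finset.Icc (-Y) Y ×ˢ Finset.Icc (-Y) Y).erase (0,0)),
      ((Int.gcd p.1 p.2 : ℝ) / (((max |p.1| |p.2| : ℤ)):ℝ)) ≤ 12 * Y * (1 + Real.log Y) := by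
  set E := ((Finset.Icc (-Y) Y ×ˢ Finset.Icc (-Y) Y).erase ((0:ℤ),(0:ℤ))) with hE
  set φ : ℤ × ℤ → ℕ × ℤ × ℤ := fun p =>
    (Int.gcd p.1 p.2, (p.1 / (Int.gcd p.1 p.2 : ℤ), p.2 / (Int.gcd p.1 p.2 : ℤ))) with hφ
  set h : ℕ × ℤ × ℤ → ℝ := fun x => (1:ℝ)/(((max |x.2.1| |x.2.2| : ℤ)):ℝ) with hh
  have hEfact : ∀ p ∈ E, p ≠ (0,0) ∧ |p.1| ≤ Y ∧ |p.2| ≤ Y := by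
    intro p hp
    rw [hE, mem_erase, mem_product, mem_Icc, mem_Icc] at hp
    exact ⟨hp.1, abs_le.mpr hp.2.1, abs_le.mpr hp.2.2⟩
  have hgpos : ∀ p ∈ E, 0 < Int.gcd p.1 p.2 := by
    intro p hp
    rcases hEfact p hp with ⟨hne, -, -⟩
    rw [Int.gcd_pos_iff]
    by_contra hc
    push_neg at hc
    exact hne (Prod.ext hc.1 hc.2)
  have hmaxone : ∀ p ∈ E, (1:ℤ) ≤ max |p.1| |p.2| := by
    intro p hp
    rcases hEfact p hp with ⟨hne, -, -⟩
    by_contra hlt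
    push_neg at hlt
    have ha : |p.1| ≤ 0 := le_trans (le_max_left |p.1| |p.2|) (by omega)
    have hb : |p.2| ≤ 0 := le_trans (le_max_right |p.1| |p.2|) (by omega)
    exact hne (Prod.ext (abs_nonpos_iff.mp ha) (abs_nonpos_iff.mp hb))
  have hcongr : ∀ p ∈ E,
      ((Int.gcd p.1 p.2 : ℝ) / (((max |p.1| |p.2| : ℤ)):ℝ)) = h (φ p) := by
    intro p hp
    have hg := hgpos p hp
    have hgZ : (0:ℤ) < (Int.gcd p.1 p.2 : ℤ) := by exact_mod_cast hg
    set g : ℤ := (Int.gcd p.1 p.2 : ℤ) with hgdef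
    have h1 : g * (p.1 / g) = p.1 := Int.mul_ediv_cancel' (Int.gcd_dvd_left _ _)
    have h2 : g * (p.2 / g) = p.2 := Int.mul_ediv_cancel' (Int.gcd_dvd_right _ _)
    have habs1 : g * |p.1/g| = |p.1| := by
      calc g * |p.1/g| = |g| * |p.1/g| := by rw [abs_of_pos hgZ]
        _ = |g * (p.1/g)| := (abs_mul _ _).symm
        _ = |p.1| := by rw [h1]
    have habs2 : g * |p.2/g| = |p.2| := by
      calc g * |p.2/g| = |g| * |p.2/g| := by rw [abs_of_pos hgZ]
        _ = |g * (p.2/g)| := (abs_mul _ _).symm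
        _ = |p.2| := by rw [h2]
    have hmx : g * max |p.1/g| |p.2/g| = max |p.1| |p.2| := by
      rw [mul_max_of_nonneg _ _ hgZ.le, habs1, habs2]
    have hmx1 := hmaxone p hp
    have hmaxpos : (0:ℤ) < max |p.1/g| |p.2/g| := by nlinarith
    have hfin : h (φ p) = (1:ℝ)/(((max |p.1/g| |p.2/g| : ℤ)):ℝ) := rfl
    rw [hfin, ← hmx]
    have hmR : (0:ℝ) < ((max |p.1/g| |p.2/g| : ℤ):ℝ) := by exact_mod_cast hmaxpos
    have hdR : (0:ℝ) < ((g * max |p.1/g| |p.2/g| : ℤ):ℝ) := by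
      exact_mod_cast mul_pos hgZ hmaxpos
    rw [div_eq_div_iff hdR.ne' hmR.ne', hgdef]
    push_cast
    ring
  rw [Finset.sum_congr rfl hcongr]
  have hinj : Set.InjOn φ E := by
    intro p hp p' hp' heq
    have e1 : (φ p).1 = (φ p').1 := by rw [heq]
    have e2 : (φ p).2.1 = (φ p').2.1 := by rw [heq]
    have e3 : (φ p).2.2 = (φ p').2.2 := by rw [heq]
    simp only [hφ] at e1 e2 e3
    have h1 : (Int.gcd p.1 p.2 : ℤ) * (p.1 / (Int.gcd p.1 p.2 : ℤ)) = p.1 :=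
      Int.mul_ediv_cancel' (Int.gcd_dvd_left _ _)
    have h2 : (Int.gcd p.1 p.2 : ℤ) * (p.2 / (Int.gcd p.1 p.2 : ℤ)) = p.2 :=
      Int.mul_ediv_cancel' (Int.gcd_dvd_right _ _)
    have h1' : (Int.gcd p'.1 p'.2 : ℤ) * (p'.1 / (Int.gcd p'.1 p'.2 : ℤ)) = p'.1 :=
      Int.mul_ediv_cancel' (Int.gcd_dvd_left _ _)
    have h2' : (Int.gcd p'.1 p'.2 : ℤ) * (p'.2 / (Int.gcd p'.1 p'.2 : ℤ)) = p'.2 :=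
      Int.mul_ediv_cancel' (Int.gcd_dvd_right _ _)
    rw [e1] at e2 e3
    apply Prod.ext
    · rw [← h1, ← h1', e1, e2]
    · rw [← h2, ← h2', e1, e3]
  rw [← Finset.sum_image (fun p hp p' hp' heq => hinj hp hp' heq)]
  set U : Finset (ℕ × ℤ × ℤ) := (Finset.Icc 1 Y.toNat).biUnion (fun g =>
    {g} ×ˢ ((Finset.Icc (-(Y/(g:ℤ))) (Y/(g:ℤ)) ×ˢ Finset.Icc (-(Y/(g:ℤ))) (Y/(g:ℤ))).erase (0,0)))
    with hU
  have hsub : E.image φ ⊆ U := by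
    intro x hx
    rw [Finset.mem_image] at hx
    obtain ⟨p, hp, rfl⟩ := hx
    have hg := hgpos p hp
    rcases hEfact p hp with ⟨hne, hb1, hb2⟩
    have hgZ : (0:ℤ) < (Int.gcd p.1 p.2 : ℤ) := by exact_mod_cast hg
    set g : ℤ := (Int.gcd p.1 p.2 : ℤ) with hgdef
    have h1 : g * (p.1 / g) = p.1 := Int.mul_ediv_cancel' (Int.gcd_dvd_left _ _)
    have h2 : g * (p.2 / g) = p.2 := Int.mul_ediv_cancel' (Int.gcd_dvd_right _ _)
    have hgY : g ≤ Y := by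
      rcases (show p.1 ≠ 0 ∨ p.2 ≠ 0 by
        by_contra hc; push_neg at hc; exact hne (Prod.ext hc.1 hc.2)) with hc | hc
      · exact le_trans (Int.le_of_dvd (abs_pos.mpr hc) ((dvd_abs _ _).mpr (Int.gcd_dvd_left _ _))) hb1
      · exact le_trans (Int.le_of_dvd (abs_pos.mpr hc) ((dvd_abs _ _).mpr (Int.gcd_dvd_right _ _))) hb2
    rw [hU, Finset.mem_biUnion]
    refine ⟨Int.gcd p.1 p.2, ?_, ?_⟩
    · rw [Finset.mem_Icc]
      have hgY' : (Int.gcd p.1 p.2 : ℤ) ≤ Y := hgY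
      omega
    · have hφ1 : (φ p).1 = Int.gcd p.1 p.2 := rfl
      have hφ2 : (φ p).2 = (p.1/g, p.2/g) := rfl
      rw [Finset.mem_product, hφ1, hφ2]
      refine ⟨Finset.mem_singleton_self _, ?_⟩
      have hq1 : |p.1 / g| ≤ Y / g := by
        rw [Int.le_ediv_iff_mul_le hgZ]
        calc |p.1/g| * g = |p.1/g| * |g| := by rw [abs_of_pos hgZ]
          _ = |p.1/g * g| := (abs_mul _ _).symm
          _ = |p.1| := by rw [mul_comm, h1]
          _ ≤ Y := hb1
      have hq2 : |p.2 / g| ≤ Y / g := by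
        rw [Int.le_ediv_iff_mul_le hgZ]
        calc |p.2/g| * g = |p.2/g| * |g| := by rw [abs_of_pos hgZ]
          _ = |p.2/g * g| := (abs_mul _ _).symm
          _ = |p.2| := by rw [mul_comm, h2]
          _ ≤ Y := hb2
      rw [Finset.mem_erase, Finset.mem_product, Finset.mem_Icc, Finset.mem_Icc]
      refine ⟨?_, abs_le.mp hq1, abs_le.mp hq2⟩
      intro hzero
      have hz1 : p.1 / g = 0 := congrArg Prod.fst hzero
      have hz2 : p.2 / g = 0 := congrArg Prod.snd hzero
      apply hne
      apply Prod.ext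
      · rw [← h1, hz1, mul_zero]
      · rw [← h2, hz2, mul_zero]
  have hnonneg : ∀ x ∈ U, x ∉ E.image φ → 0 ≤ h x := by
    intro x hx _
    rw [hU, Finset.mem_biUnion] at hx
    obtain ⟨g, hgmem, hxmem⟩ := hx
    rw [Finset.mem_product, Finset.mem_erase, Finset.mem_product, Finset.mem_Icc,
      Finset.mem_Icc] at hxmem
    have hm : (0:ℤ) ≤ max |x.2.1| |x.2.2| := le_trans (abs_nonneg _) (le_max_left _ _)
    have : (0:ℝ) ≤ ((max |x.2.1| |x.2.2| : ℤ):ℝ) := by exact_mod_cast hm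
    rw [hh]
    positivity
  apply le_trans (Finset.sum_le_sum_of_subset_of_nonneg hsub hnonneg)
  have hdisj : ∀ g ∈ Finset.Icc 1 Y.toNat, ∀ g' ∈ Finset.Icc 1 Y.toNat, g ≠ g' →
      Disjoint ({g} ×ˢ ((Finset.Icc (-(Y/(g:ℤ))) (Y/(g:ℤ)) ×ˢ Finset.Icc (-(Y/(g:ℤ))) (Y/(g:ℤ))).erase (0,0)))
        ({g'} ×ˢ ((Finset.Icc (-(Y/(g':ℤ))) (Y/(g':ℤ)) ×ˢ Finset.Icc (-(Y/(g':ℤ))) (Y/(g':ℤ))).erase (0,0))) := by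
    intro g _ g' _ hne
    rw [Finset.disjoint_left]
    intro x hx hx'
    rw [Finset.mem_product, Finset.mem_singleton] at hx hx'
    exact hne (hx.1 ▸ hx'.1 ▸ rfl)
  rw [hU, Finset.sum_biUnion hdisj]
  have hterm : ∀ g ∈ Finset.Icc 1 Y.toNat,
      ∑ x ∈ ({g} ×ˢ ((Finset.Icc (-(Y/(g:ℤ))) (Y/(g:ℤ)) ×ˢ Finset.Icc (-(Y/(g:ℤ))) (Y/(g:ℤ))).erase (0,0))), h x
      ≤ 12 * Y * (g:ℝ)⁻¹ := by
    intro g hg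
    rw [Finset.mem_Icc] at hg
    have hg1 : 1 ≤ g := hg.1
    have hgR : (0:ℝ) < (g:ℝ) := by exact_mod_cast hg1
    have hgZ' : (0:ℤ) < (g:ℤ) := by exact_mod_cast hg1
    have hZnn : (0:ℤ) ≤ Y/(g:ℤ) := Int.ediv_nonneg (by omega) hgZ'.le
    rw [Finset.sum_product, Finset.sum_singleton]
    calc ∑ w ∈ ((Finset.Icc (-(Y/(g:ℤ))) (Y/(g:ℤ)) ×ˢ Finset.Icc (-(Y/(g:ℤ))) (Y/(g:ℤ))).erase (0,0)),
          h (g, w)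
        = ∑ w ∈ ((Finset.Icc (-(Y/(g:ℤ))) (Y/(g:ℤ)) ×ˢ Finset.Icc (-(Y/(g:ℤ))) (Y/(g:ℤ))).erase (0,0)),
          (1:ℝ)/(((max |w.1| |w.2| : ℤ)):ℝ) := rfl
      _ ≤ 12 * ((Y/(g:ℤ) : ℤ):ℝ) := sum_inv_max (Y/(g:ℤ)) hZnn
      _ ≤ 12 * ((Y:ℝ)/(g:ℝ)) := by
          have hmul : (Y/(g:ℤ)) * (g:ℤ) ≤ Y := Int.ediv_mul_le Y (ne_of_gt hgZ')
          have hmulR : ((Y/(g:ℤ) : ℤ):ℝ) * (g:ℝ) ≤ (Y:ℝ) := by exact_mod_cast hmul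
          have hle : ((Y/(g:ℤ) : ℤ):ℝ) ≤ (Y:ℝ)/(g:ℝ) := by
            rw [le_div_iff₀ hgR]; exact hmulR
          linarith
      _ = 12 * Y * (g:ℝ)⁻¹ := by ring
  apply le_trans (Finset.sum_le_sum hterm)
  rw [← Finset.mul_sum]
  have hlog : Real.log (Y.toNat : ℝ) = Real.log (Y:ℝ) := by
    rw [toNat_cast_real _ (by omega)]
  calc 12 * (Y:ℝ) * ∑ g ∈ Finset.Icc 1 Y.toNat, (g:ℝ)⁻¹
      ≤ 12 * (Y:ℝ) * (1 + Real.log (Y.toNat : ℝ)) := by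
        apply mul_le_mul_of_nonneg_left (harmonic_sum Y.toNat)
        have : (1:ℝ) ≤ (Y:ℝ) := by exact_mod_cast hY
        linarith
    _ = 12 * Y * (1 + Real.log Y) := by rw [hlog]





lemma card_filter_product {α β : Type*} [DecidableEq α] [DecidableEq β]
    (A : Finset α) (B : Finset β) (P : α × β → Prop) [DecidablePred P] :
    ((A ×ˢ B).filter P).card = ∑ a ∈ A, (B.filter (fun b => P (a, b))).card := by
  rw [Finset.card_filter, Finset.sum_product]
  apply Finset.sum_congr rfl
  intro a _
  rw [Finset.card_filter]

lemma card_multiples' (L g : ℕ) (hg : 1 ≤ g) :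
    ((Finset.range (L+1)).filter (fun l : ℕ => (g:ℤ) ∣ (l:ℤ))).card ≤ L / g + 1 := by
  have heq : (Finset.range (L+1)).filter (fun l : ℕ => (g:ℤ) ∣ (l:ℤ))
      = (Finset.range (L+1)).filter (fun l : ℕ => g ∣ l) := by
    apply Finset.filter_congr
    intro l _
    simp [Int.natCast_dvd_natCast]
  rw [heq]
  have hle : ((Finset.range (L+1)).filter (fun l : ℕ => g ∣ l)).card ≤ (Finset.range (L/g+1)).card := by
    apply Finset.card_le_card_of_injOn (fun l => l / g)
    · intro l hl
      rw [Finset.mem_coe, Finset.mem_filter, Finset.mem_range] at hl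
      rw [Finset.mem_coe, Finset.mem_range]
      show l / g < L / g + 1
      have : l / g ≤ L / g := Nat.div_le_div_right (by omega)
      omega
    · intro l hl l' hl' heq'
      rw [Finset.coe_filter] at hl hl'
      simp only [Set.mem_setOf_eq, Finset.mem_range] at hl hl'
      have h1 : g * (l / g) = l := Nat.mul_div_cancel' hl.2
      have h2 : g * (l' / g) = l' := Nat.mul_div_cancel' hl'.2
      simp only at heq'
      calc l = g * (l / g) := h1.symm
        _ = g * (l' / g) := by rw [heq']
        _ = l' := h2
  simpa using hle

lemma grand (Y : ℤ) (hY : 1 ≤ Y) (L : ℕ) :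
    ∑ l ∈ Finset.range (L+1),
      ((((Finset.Icc (-Y) Y ×ˢ Finset.Icc (-Y) Y) ×ˢ (Finset.Icc (-Y) Y ×ˢ Finset.Icc (-Y) Y)).filter
        (fun q : (ℤ×ℤ)×(ℤ×ℤ) => q.1.1 * q.2.1 + q.1.2 * q.2.2 = (l:ℤ))).card : ℝ)
    ≤ 66 * (Y:ℝ)^2 * ((L:ℝ) + 1 + Real.log Y) := by
  have hYR : (1:ℝ) ≤ (Y:ℝ) := by exact_mod_cast hY
  have hlog : 0 ≤ Real.log Y := Real.log_nonneg hYR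
  set I := Finset.Icc (-Y) Y with hI
  set S := I ×ˢ I with hS
  have hcardI : ((I.card : ℝ)) = 2*(Y:ℝ)+1 := card_Icc_int Y (by omega)
  have hcardS : ((S.card : ℝ)) = (2*(Y:ℝ)+1)^2 := by
    rw [hS, Finset.card_product]
    push_cast
    rw [hcardI]; ring
  have hstep1 : ∀ l : ℕ,
      ((((I ×ˢ I) ×ˢ (I ×ˢ I)).filter
        (fun q : (ℤ×ℤ)×(ℤ×ℤ) => q.1.1 * q.2.1 + q.1.2 * q.2.2 = (l:ℤ))).card : ℝ)
      = ∑ p ∈ S, ((S.filter (fun w : ℤ×ℤ => p.1*w.1 + p.2*w.2 = (l:ℤ))).card : ℝ) := by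
    intro l
    rw [card_filter_product]
    push_cast
    rfl
  calc ∑ l ∈ Finset.range (L+1),
      ((((I ×ˢ I) ×ˢ (I ×ˢ I)).filter
        (fun q : (ℤ×ℤ)×(ℤ×ℤ) => q.1.1 * q.2.1 + q.1.2 * q.2.2 = (l:ℤ))).card : ℝ)
      = ∑ l ∈ Finset.range (L+1), ∑ p ∈ S,
          ((S.filter (fun w : ℤ×ℤ => p.1*w.1 + p.2*w.2 = (l:ℤ))).card : ℝ) :=
        Finset.sum_congr rfl (fun l _ => hstep1 l)
    _ = ∑ p ∈ S, ∑ l ∈ Finset.range (L+1),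
          ((S.filter (fun w : ℤ×ℤ => p.1*w.1 + p.2*w.2 = (l:ℤ))).card : ℝ) := Finset.sum_comm
    _ ≤ 66 * (Y:ℝ)^2 * ((L:ℝ) + 1 + Real.log Y) := ?_
  have h00 : ((0,0) : ℤ×ℤ) ∈ S := by
    rw [hS, Finset.mem_product]
    constructor <;> (rw [hI, Finset.mem_Icc]; omega)
  rw [← Finset.add_sum_erase S _ h00]
  -- term at (0,0)
  have hT0 : ∑ l ∈ Finset.range (L+1),
      ((S.filter (fun w : ℤ×ℤ => ((0,0) : ℤ×ℤ).1*w.1 + ((0,0) : ℤ×ℤ).2*w.2 = (l:ℤ))).card : ℝ)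
      ≤ ((L:ℝ)+1) * (2*(Y:ℝ)+1)^2 := by
    calc ∑ l ∈ Finset.range (L+1),
        ((S.filter (fun w : ℤ×ℤ => ((0,0) : ℤ×ℤ).1*w.1 + ((0,0) : ℤ×ℤ).2*w.2 = (l:ℤ))).card : ℝ)
        ≤ ∑ l ∈ Finset.range (L+1), (2*(Y:ℝ)+1)^2 := by
          apply Finset.sum_le_sum
          intro l _
          rw [← hcardS]
          exact_mod_cast Finset.card_filter_le _ _
      _ = ((L:ℝ)+1) * (2*(Y:ℝ)+1)^2 := by
          rw [Finset.sum_const, Finset.card_range, nsmul_eq_mul]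
          push_cast; ring
  -- per-p bound on the erased part
  have hperp : ∀ p ∈ S.erase (0,0),
      ∑ l ∈ Finset.range (L+1),
        ((S.filter (fun w : ℤ×ℤ => p.1*w.1 + p.2*w.2 = (l:ℤ))).card : ℝ)
      ≤ 4*(Y:ℝ)*(L:ℝ) * ((1:ℝ)/(((max |p.1| |p.2| : ℤ)):ℝ)) + (L:ℝ)
        + 4*(Y:ℝ) * ((Int.gcd p.1 p.2 : ℝ)/(((max |p.1| |p.2| : ℤ)):ℝ)) + 1 := by
    intro p hp
    have hpne : p ≠ (0,0) := (Finset.mem_erase.mp hp).1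
    have hgN : 0 < Int.gcd p.1 p.2 := by
      rw [Int.gcd_pos_iff]
      by_contra hc
      push_neg at hc
      exact hpne (Prod.ext hc.1 hc.2)
    have hmxpos : (0:ℤ) < max |p.1| |p.2| := by
      rcases (show p.1 ≠ 0 ∨ p.2 ≠ 0 by
        by_contra hc; push_neg at hc; exact hpne (Prod.ext hc.1 hc.2)) with hc | hc
      · exact lt_of_lt_of_le (abs_pos.mpr hc) (le_max_left _ _)
      · exact lt_of_lt_of_le (abs_pos.mpr hc) (le_max_right _ _)
    have hmxR : (0:ℝ) < (((max |p.1| |p.2| : ℤ)):ℝ) := by exact_mod_cast hmxpos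
    have hgR : (0:ℝ) < (Int.gcd p.1 p.2 : ℝ) := by exact_mod_cast hgN
    set B : ℝ := 4*(Y:ℝ)*(Int.gcd p.1 p.2 : ℝ)/(((max |p.1| |p.2| : ℤ)):ℝ) + 1 with hB
    have hBnn : 0 ≤ B := by
      rw [hB]; positivity
    calc ∑ l ∈ Finset.range (L+1),
        ((S.filter (fun w : ℤ×ℤ => p.1*w.1 + p.2*w.2 = (l:ℤ))).card : ℝ)
        ≤ ∑ l ∈ Finset.range (L+1),
            (if (Int.gcd p.1 p.2 : ℤ) ∣ (l:ℤ) then B else 0) := by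
          apply Finset.sum_le_sum
          intro l _
          exact cnt_bound Y hY p hpne (l:ℤ)
      _ = ((Finset.range (L+1)).filter (fun l : ℕ => (Int.gcd p.1 p.2 : ℤ) ∣ (l:ℤ))).card * B := by
          rw [← Finset.sum_filter, Finset.sum_const, nsmul_eq_mul]
      _ ≤ ((L:ℝ)/(Int.gcd p.1 p.2 : ℝ) + 1) * B := by
          apply mul_le_mul_of_nonneg_right _ hBnn
          calc (((Finset.range (L+1)).filter (fun l : ℕ => (Int.gcd p.1 p.2 : ℤ) ∣ (l:ℤ))).card : ℝ)
              ≤ ((L / Int.gcd p.1 p.2 + 1 : ℕ) : ℝ) := by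
                exact_mod_cast card_multiples' L (Int.gcd p.1 p.2) hgN
            _ ≤ (L:ℝ)/(Int.gcd p.1 p.2 : ℝ) + 1 := by
                push_cast
                have := Nat.cast_div_le (α := ℝ) (m := L) (n := Int.gcd p.1 p.2)
                linarith
      _ ≤ 4*(Y:ℝ)*(L:ℝ) * ((1:ℝ)/(((max |p.1| |p.2| : ℤ)):ℝ)) + (L:ℝ)
        + 4*(Y:ℝ) * ((Int.gcd p.1 p.2 : ℝ)/(((max |p.1| |p.2| : ℤ)):ℝ)) + 1 := by
          rw [hB]
          have hgiR : (1:ℝ) ≤ (Int.gcd p.1 p.2 : ℝ) := by exact_mod_cast hgN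
          have hLnn : (0:ℝ) ≤ (L:ℝ) := Nat.cast_nonneg L
          have hdivle : (L:ℝ)/(Int.gcd p.1 p.2 : ℝ) ≤ (L:ℝ) := by
            apply div_le_self hLnn hgiR
          have hexp : ((L:ℝ)/(Int.gcd p.1 p.2 : ℝ)) * (4*(Y:ℝ)*(Int.gcd p.1 p.2 : ℝ)/(((max |p.1| |p.2| : ℤ)):ℝ))
              = 4*(Y:ℝ)*(L:ℝ) * ((1:ℝ)/(((max |p.1| |p.2| : ℤ)):ℝ)) := by
            have step : ((L:ℝ)/(Int.gcd p.1 p.2 : ℝ)) * (4*(Y:ℝ)*(Int.gcd p.1 p.2 : ℝ)/(((max |p.1| |p.2| : ℤ)):ℝ))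
                = 4*(Y:ℝ)*(L:ℝ)*((Int.gcd p.1 p.2 : ℝ)/(Int.gcd p.1 p.2 : ℝ))*((1:ℝ)/(((max |p.1| |p.2| : ℤ)):ℝ)) := by
              ring
            rw [step, div_self hgR.ne', mul_one]
          have hLHS : ((L:ℝ)/(Int.gcd p.1 p.2 : ℝ) + 1) * (4*(Y:ℝ)*(Int.gcd p.1 p.2 : ℝ)/(((max |p.1| |p.2| : ℤ)):ℝ) + 1)
              = ((L:ℝ)/(Int.gcd p.1 p.2 : ℝ)) * (4*(Y:ℝ)*(Int.gcd p.1 p.2 : ℝ)/(((max |p.1| |p.2| : ℤ)):ℝ))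
                + (L:ℝ)/(Int.gcd p.1 p.2 : ℝ) + 4*(Y:ℝ)*(Int.gcd p.1 p.2 : ℝ)/(((max |p.1| |p.2| : ℤ)):ℝ) + 1 := by
            ring
          rw [hLHS, hexp]
          have heq2 : 4*(Y:ℝ) * ((Int.gcd p.1 p.2 : ℝ)/(((max |p.1| |p.2| : ℤ)):ℝ))
              = 4*(Y:ℝ)*(Int.gcd p.1 p.2 : ℝ)/(((max |p.1| |p.2| : ℤ)):ℝ) := by ring
          linarith [hdivle, heq2.ge, heq2.le]
  -- sum the per-p bounds
  have hsumE : ∑ p ∈ S.erase (0,0),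
      ∑ l ∈ Finset.range (L+1),
        ((S.filter (fun w : ℤ×ℤ => p.1*w.1 + p.2*w.2 = (l:ℤ))).card : ℝ)
      ≤ 4*(Y:ℝ)*(L:ℝ) * (12*(Y:ℝ)) + ((2*(Y:ℝ)+1)^2) * (L:ℝ)
        + 4*(Y:ℝ) * (12*(Y:ℝ)*(1 + Real.log Y)) + (2*(Y:ℝ)+1)^2 := by
    have hcardE : ((S.erase (0,0)).card : ℝ) ≤ (2*(Y:ℝ)+1)^2 := by
      rw [← hcardS]
      exact_mod_cast Finset.card_le_card (Finset.erase_subset _ _)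
    calc ∑ p ∈ S.erase (0,0), ∑ l ∈ Finset.range (L+1),
          ((S.filter (fun w : ℤ×ℤ => p.1*w.1 + p.2*w.2 = (l:ℤ))).card : ℝ)
        ≤ ∑ p ∈ S.erase (0,0),
            (4*(Y:ℝ)*(L:ℝ) * ((1:ℝ)/(((max |p.1| |p.2| : ℤ)):ℝ)) + (L:ℝ)
            + 4*(Y:ℝ) * ((Int.gcd p.1 p.2 : ℝ)/(((max |p.1| |p.2| : ℤ)):ℝ)) + 1) :=
          Finset.sum_le_sum hperp
      _ = 4*(Y:ℝ)*(L:ℝ) * (∑ p ∈ S.erase (0,0), (1:ℝ)/(((max |p.1| |p.2| : ℤ)):ℝ))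
          + ((S.erase (0,0)).card : ℝ) * (L:ℝ)
          + 4*(Y:ℝ) * (∑ p ∈ S.erase (0,0), (Int.gcd p.1 p.2 : ℝ)/(((max |p.1| |p.2| : ℤ)):ℝ))
          + ((S.erase (0,0)).card : ℝ) := by
          rw [Finset.sum_add_distrib, Finset.sum_add_distrib, Finset.sum_add_distrib,
            Finset.sum_const, Finset.sum_const, ← Finset.mul_sum, ← Finset.mul_sum]
          simp only [nsmul_eq_mul, mul_one]
      _ ≤ 4*(Y:ℝ)*(L:ℝ) * (12*(Y:ℝ)) + ((2*(Y:ℝ)+1)^2) * (L:ℝ)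
          + 4*(Y:ℝ) * (12*(Y:ℝ)*(1 + Real.log Y)) + (2*(Y:ℝ)+1)^2 := by
          have hS1 := sum_inv_max Y (by omega)
          have hS2 := sum_gcd_max Y hY
          have hc1 : (0:ℝ) ≤ 4*(Y:ℝ)*(L:ℝ) := by positivity
          have hc2 : (0:ℝ) ≤ 4*(Y:ℝ) := by positivity
          have hLnn : (0:ℝ) ≤ (L:ℝ) := Nat.cast_nonneg L
          have m1 := mul_le_mul_of_nonneg_left hS1 hc1
          have m2 := mul_le_mul_of_nonneg_left hS2 hc2
          have m3 := mul_le_mul_of_nonneg_right hcardE hLnn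
          nlinarith [m1, m2, m3, hcardE]
  -- combine
  have hfinal : ((L:ℝ)+1) * (2*(Y:ℝ)+1)^2
      + (4*(Y:ℝ)*(L:ℝ) * (12*(Y:ℝ)) + ((2*(Y:ℝ)+1)^2) * (L:ℝ)
        + 4*(Y:ℝ) * (12*(Y:ℝ)*(1 + Real.log Y)) + (2*(Y:ℝ)+1)^2)
      ≤ 66 * (Y:ℝ)^2 * ((L:ℝ) + 1 + Real.log Y) := by
    have hLnn : (0:ℝ) ≤ (L:ℝ) := Nat.cast_nonneg L
    have hsq : (2*(Y:ℝ)+1)^2 ≤ 9*(Y:ℝ)^2 := by nlinarith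
    nlinarith [hsq, hLnn, hlog, hYR, mul_le_mul_of_nonneg_right hsq hLnn,
      mul_le_mul_of_nonneg_right hsq hlog]
  calc ∑ l ∈ Finset.range (L+1),
        ((S.filter (fun w : ℤ×ℤ => ((0,0):ℤ×ℤ).1*w.1 + ((0,0):ℤ×ℤ).2*w.2 = (l:ℤ))).card : ℝ)
      + ∑ p ∈ S.erase (0,0), ∑ l ∈ Finset.range (L+1),
          ((S.filter (fun w : ℤ×ℤ => p.1*w.1 + p.2*w.2 = (l:ℤ))).card : ℝ)
      ≤ ((L:ℝ)+1) * (2*(Y:ℝ)+1)^2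
        + (4*(Y:ℝ)*(L:ℝ) * (12*(Y:ℝ)) + ((2*(Y:ℝ)+1)^2) * (L:ℝ)
          + 4*(Y:ℝ) * (12*(Y:ℝ)*(1 + Real.log Y)) + (2*(Y:ℝ)+1)^2) := add_le_add hT0 hsumE
    _ ≤ 66 * (Y:ℝ)^2 * ((L:ℝ) + 1 + Real.log Y) := hfinal



/-- `r m` is the number of representations of `m` as a sum of two squares of integers
(counted with signs and order). -/
noncomputable def r (m : ℕ) : ℕ :=
  ((Finset.Icc (-(m : ℤ)) (m : ℤ) ×ˢ Finset.Icc (-(m : ℤ)) (m : ℤ)).filter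
    (fun p => p.1 ^ 2 + p.2 ^ 2 = (m : ℤ))).card

lemma r_le (m : ℕ) (K : ℤ) (hK : 0 ≤ K) (h : (m:ℤ) ≤ K^2) :
    r m ≤ ((Finset.Icc (-K) K ×ˢ Finset.Icc (-K) K).filter
      (fun p : ℤ×ℤ => p.1 ^ 2 + p.2 ^ 2 = (m : ℤ))).card := by
  apply Finset.card_le_card
  intro p hp
  rw [Finset.mem_filter, Finset.mem_product, Finset.mem_Icc, Finset.mem_Icc] at hp
  obtain ⟨⟨h1, h2⟩, he⟩ := hp
  have hp1 : p.1^2 ≤ K^2 := by nlinarith [sq_nonneg p.1, sq_nonneg p.2]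
  have hp2 : p.2^2 ≤ K^2 := by nlinarith [sq_nonneg p.1, sq_nonneg p.2]
  rw [Finset.mem_filter, Finset.mem_product, Finset.mem_Icc, Finset.mem_Icc]
  refine ⟨⟨⟨?_, ?_⟩, ?_, ?_⟩, he⟩ <;> nlinarith

lemma sum_r_le (N l : ℕ) (hN : 2 ≤ N) (hl : l ≤ 8 * N^2) :
    ∑ m ∈ Finset.range (8 * N^2 + 1), r m * r (m + l)
    ≤ (((Finset.Icc (-(8*(N:ℤ))) (8*(N:ℤ)) ×ˢ Finset.Icc (-(8*(N:ℤ))) (8*(N:ℤ))) ×ˢ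
        (Finset.Icc (-(8*(N:ℤ))) (8*(N:ℤ)) ×ˢ Finset.Icc (-(8*(N:ℤ))) (8*(N:ℤ)))).filter
        (fun q : (ℤ×ℤ)×(ℤ×ℤ) => q.1.1 * q.2.1 + q.1.2 * q.2.2 = (l:ℤ))).card := by
  set K : ℤ := 4*(N:ℤ) with hK
  set A : ℕ → Finset (ℤ×ℤ) := fun m => ((Finset.Icc (-K) K ×ˢ Finset.Icc (-K) K).filter
      (fun p : ℤ×ℤ => p.1 ^ 2 + p.2 ^ 2 = (m : ℤ))) with hA
  have hNZ : (2:ℤ) ≤ (N:ℤ) := by exact_mod_cast hN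
  have hKsq : K^2 = 16*(N:ℤ)^2 := by rw [hK]; ring
  have hbound : ∀ m ∈ Finset.range (8 * N^2 + 1), r m * r (m + l) ≤ (A m ×ˢ A (m+l)).card := by
    intro m hm
    rw [Finset.mem_range] at hm
    have hm' : (m:ℤ) ≤ K^2 := by
      rw [hKsq]; push_cast; nlinarith
    have hml : ((m+l:ℕ):ℤ) ≤ K^2 := by
      rw [hKsq]; push_cast; nlinarith
    rw [Finset.card_product]
    exact Nat.mul_le_mul (r_le m K (by positivity) hm') (r_le (m+l) K (by positivity) hml)
  calc ∑ m ∈ Finset.range (8 * N^2 + 1), r m * r (m + l)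
      ≤ ∑ m ∈ Finset.range (8 * N^2 + 1), (A m ×ˢ A (m+l)).card := Finset.sum_le_sum hbound
    _ = ((Finset.range (8 * N^2 + 1)).biUnion (fun m => A m ×ˢ A (m+l))).card := by
        rw [Finset.card_biUnion]
        intro m _ m' _ hne
        simp only [Function.onFun]
        rw [Finset.disjoint_left]
        intro q hq hq'
        rw [Finset.mem_product] at hq hq'
        have e1 := (Finset.mem_filter.mp hq.1).2
        have e2 := (Finset.mem_filter.mp hq'.1).2
        apply hne
        have : (m:ℤ) = (m':ℤ) := by rw [← e1, ← e2]
        exact_mod_cast this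
    _ ≤ _ := by
        apply Finset.card_le_card_of_injOn
          (fun q : (ℤ×ℤ)×(ℤ×ℤ) =>
            ((q.2.1 - q.1.1, q.2.2 - q.1.2), (q.2.1 + q.1.1, q.2.2 + q.1.2)))
        · intro q hq
          rw [Finset.mem_coe, Finset.mem_biUnion] at hq
          obtain ⟨m, hm, hq⟩ := hq
          rw [Finset.mem_product] at hq
          obtain ⟨hq1, hq2⟩ := hq
          rw [hA, Finset.mem_filter, Finset.mem_product, Finset.mem_Icc, Finset.mem_Icc] at hq1 hq2
          obtain ⟨⟨⟨ha1, ha2⟩, hb1, hb2⟩, he1⟩ := hq1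
          obtain ⟨⟨⟨hc1, hc2⟩, hd1, hd2⟩, he2⟩ := hq2
          rw [Finset.mem_coe, Finset.mem_filter, Finset.mem_product, Finset.mem_product, Finset.mem_product,
            Finset.mem_Icc, Finset.mem_Icc, Finset.mem_Icc, Finset.mem_Icc]
          constructor
          · constructor
            · constructor <;> constructor <;> (simp only; rw [hK] at *; omega)
            · constructor <;> constructor <;> (simp only; rw [hK] at *; omega)
          · simp only
            have he2' : q.2.1^2 + q.2.2^2 = (m:ℤ) + (l:ℤ) := by
              rw [he2]; push_cast; ring
            linear_combination he2' - he1
        · intro q hq q' hq' heq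
          simp only [Prod.mk.injEq] at heq
          obtain ⟨⟨e1, e2⟩, e3, e4⟩ := heq
          have : q.1.1 = q'.1.1 ∧ q.1.2 = q'.1.2 ∧ q.2.1 = q'.2.1 ∧ q.2.2 = q'.2.2 := by
            refine ⟨by omega, by omega, by omega, by omega⟩
          obtain ⟨f1, f2, f3, f4⟩ := this
          exact Prod.ext (Prod.ext f1 f2) (Prod.ext f3 f4)


theorem stmt_13 :
    ∃ C > (0 : ℝ), ∀ N : ℕ, 2 ≤ N → ∀ β : ℝ, 0 < β → β < N →
      (∑ l ∈ Finset.range (⌊3 * β⌋₊ + 1), ∑ m ∈ Finset.range (8 * N ^ 2 + 1),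
          (r m : ℝ) * (r (m + l) : ℝ))
        ≤ C * ((N : ℝ) ^ 2 * Real.log N + (1 + β) * Real.log (2 + β) * (N : ℝ) ^ 2) := by
  refine ⟨1000000, by norm_num, ?_⟩
  intro N hN β hβ hβN
  set Lm := ⌊3 * β⌋₊ with hLm
  have hNR : (2:ℝ) ≤ (N:ℝ) := by exact_mod_cast hN
  have hN0 : (0:ℝ) < (N:ℝ) := by linarith
  have hYint : (1:ℤ) ≤ 8*(N:ℤ) := by
    have : (2:ℤ) ≤ (N:ℤ) := by exact_mod_cast hN
    omega
  have hLm3N : Lm ≤ 3*N := by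
    rw [hLm]
    have h1 : (3:ℝ)*β ≤ ((3*N : ℕ) : ℝ) := by push_cast; nlinarith
    calc ⌊3*β⌋₊ ≤ ⌊((3*N : ℕ) : ℝ)⌋₊ := Nat.floor_mono h1
      _ = 3*N := Nat.floor_natCast _
  have hstep : ∀ l ∈ Finset.range (Lm + 1),
      ((∑ m ∈ Finset.range (8 * N ^ 2 + 1), r m * r (m + l) : ℕ) : ℝ)
      ≤ ((((Finset.Icc (-(8*(N:ℤ))) (8*(N:ℤ)) ×ˢ Finset.Icc (-(8*(N:ℤ))) (8*(N:ℤ))) ×ˢ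
          (Finset.Icc (-(8*(N:ℤ))) (8*(N:ℤ)) ×ˢ Finset.Icc (-(8*(N:ℤ))) (8*(N:ℤ)))).filter
          (fun q : (ℤ×ℤ)×(ℤ×ℤ) => q.1.1 * q.2.1 + q.1.2 * q.2.2 = (l:ℤ))).card : ℝ) := by
    intro l hl
    rw [Finset.mem_range] at hl
    have hl8 : l ≤ 8 * N^2 := by nlinarith [hLm3N]
    exact_mod_cast sum_r_le N l hN hl8
  have hgrand := grand (8*(N:ℤ)) hYint Lm
  have hcast : (∑ l ∈ Finset.range (Lm + 1), ∑ m ∈ Finset.range (8 * N ^ 2 + 1),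
      (r m : ℝ) * (r (m + l) : ℝ))
      = ∑ l ∈ Finset.range (Lm + 1),
        ((∑ m ∈ Finset.range (8 * N ^ 2 + 1), r m * r (m + l) : ℕ) : ℝ) := by
    push_cast; rfl
  rw [hcast]
  apply le_trans (Finset.sum_le_sum hstep)
  apply le_trans hgrand
  -- numerics
  have hYR : ((8*(N:ℤ) : ℤ):ℝ) = 8*(N:ℝ) := by push_cast; ring
  rw [hYR]
  have hlog2 : (0.6931471803:ℝ) < Real.log 2 := Real.log_two_gt_d9
  have hxlog : Real.log 2 ≤ Real.log N := Real.log_le_log (by norm_num) hNR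
  have hx : (0:ℝ) < Real.log N := lt_of_lt_of_le (by linarith) hxlog
  have hlog8 : Real.log (8*(N:ℝ)) = Real.log 8 + Real.log N :=
    Real.log_mul (by norm_num) (ne_of_gt hN0)
  have h8 : Real.log 8 = 3 * Real.log 2 := by
    rw [show (8:ℝ) = 2^3 by norm_num, Real.log_pow]
    push_cast; ring
  have hfloor : (Lm:ℝ) ≤ 3*β := by
    rw [hLm]; exact Nat.floor_le (by positivity)
  have hy' : (0.6931471803:ℝ) ≤ Real.log (2+β) :=
    le_trans hlog2.le (Real.log_le_log (by norm_num) (by linarith))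
  have hkey : (Lm:ℝ) + 1 + Real.log (8*(N:ℝ)) ≤ 3*β + 6*Real.log N := by
    rw [hlog8, h8]
    linarith
  calc 66*(8*(N:ℝ))^2*((Lm:ℝ) + 1 + Real.log (8*(N:ℝ)))
      ≤ 66*(8*(N:ℝ))^2*(3*β + 6*Real.log N) := by
        apply mul_le_mul_of_nonneg_left hkey (by positivity)
    _ ≤ 1000000*((N:ℝ)^2*Real.log N + (1+β)*Real.log (2+β)*(N:ℝ)^2) := by
        have e : 66*(8*(N:ℝ))^2*(3*β + 6*Real.log N)
            = 12672*(β*(N:ℝ)^2) + 25344*((N:ℝ)^2*Real.log N) := by ring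
        rw [e]
        have h1 : 25344*((N:ℝ)^2*Real.log N) ≤ 1000000*((N:ℝ)^2*Real.log N) := by
          nlinarith [hx, sq_nonneg (N:ℝ)]
        have hb : β*(0.6931471803:ℝ) ≤ (1+β)*Real.log (2+β) := by nlinarith [hy', hβ]
        have h2 : 12672*(β*(N:ℝ)^2) ≤ 1000000*((1+β)*Real.log (2+β)*(N:ℝ)^2) := by
          nlinarith [mul_le_mul_of_nonneg_right hb (sq_nonneg (N:ℝ)), sq_nonneg (N:ℝ), hβ,
            mul_pos hβ (mul_pos hN0 hN0)]
        linarith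
end

section
/- Let α₂ > 0 be a fixed real number, N ≥ 2 an integer, and U ≥ N ≥ 1 real numbers. Then the number of integer quadruples (y₁,y₂,y₃,y₄) with N ≤ y_i ≤ 2N and |y₁² − y₂² − α₂(y₃² − y₄²)| ≤ N²/U is ≪ N²(1 + N²/U) log N, with implied constant depending only on α₂. -/
/-!
Write `f (y, y') = y² - y'²` and `ε = N² / U`. The quadruples counted are the pairs `(p, q)` of
points of the box `[N, 2N]²` with `|f p - α₂ f q| ≤ ε`. Grouping them by the values `m = f p`,
`l = f q` and using `r(m) r(l) ≤ (r(m)² + r(l)²) / 2`, where `r` counts representations, the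
count is at most `O(1 + ε)` times `∑ r(m)²`, the number of solutions of `x₁² - x₂² = x₃² - x₄²`:
each `m` meets only `O(1 + ε)` values `l` with `|m - α₂ l| ≤ ε`, and conversely.
A solution is determined by `s = x₁ + x₂`, `t = x₃ + x₄` and `m = x₁² - x₂²`, a common multiple of
`s` and `t` in `[-4N², 4N²]`. For `s, t ∈ [2N, 4N]` there are at most `2 gcd(s, t) + 1` such `m`,
and `∑ gcd(s, t) ≤ ∑_{d ≤ 4N} d (2N/d + 1)² = O(N² log N)`.
-/

open Finset Real

theorem card_le_of_forall_cast_mem_Icc {s : Finset ℤ} {x y : ℝ} (hxy : x ≤ y)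
    (hs : ∀ n ∈ s, (n : ℝ) ∈ Set.Icc x y) : (#s : ℝ) ≤ y - x + 1 := by
  have hsub : s ⊆ Icc ⌈x⌉ ⌊y⌋ := fun n hn => Int.cast_mem_Icc_iff.1 (hs n hn)
  have hnonneg : 0 ≤ ⌊y⌋ + 1 - ⌈x⌉ := by
    have : ⌈x⌉ ≤ ⌊y⌋ + 1 := Int.ceil_le.2 (by push_cast; linarith [Int.lt_floor_add_one y])
    omega
  have hcard : (#(Icc ⌈x⌉ ⌊y⌋) : ℝ) = ⌊y⌋ + 1 - ⌈x⌉ := by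
    rw [Int.card_Icc]
    exact_mod_cast Int.toNat_of_nonneg hnonneg
  calc (#s : ℝ) ≤ #(Icc ⌈x⌉ ⌊y⌋) := by exact_mod_cast card_le_card hsub
    _ ≤ y - x + 1 := by rw [hcard]; linarith [Int.floor_le y, Int.le_ceil x]

theorem card_filter_dvd_Icc_le {a b r : ℤ} (hr : 0 < r) (hab : a ≤ b) :
    (#{m ∈ Icc a b | r ∣ m} : ℝ) ≤ (b - a) / r + 1 := by
  have hr' : (0 : ℝ) < r := by exact_mod_cast hr
  have hinj : Set.InjOn (· / r) ({m ∈ Icc a b | r ∣ m} : Finset ℤ) := by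
    intro m hm n hn h
    rw [mem_coe, mem_filter] at hm hn
    rw [← Int.ediv_mul_cancel hm.2, ← Int.ediv_mul_cancel hn.2, show m / r = n / r from h]
  rw [← card_image_of_injOn hinj, show ((b : ℝ) - a) / r = b / r - a / r by ring]
  refine card_le_of_forall_cast_mem_Icc (by gcongr) fun k hk => ?_
  obtain ⟨m, hm, rfl⟩ := mem_image.1 hk
  rw [mem_filter, mem_Icc] at hm
  have hkm : ((m / r : ℤ) : ℝ) * r = m := by exact_mod_cast Int.ediv_mul_cancel hm.2
  constructor
  · rw [div_le_iff₀ hr', hkm]; exact_mod_cast hm.1.1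
  · rw [le_div_iff₀ hr', hkm]; exact_mod_cast hm.1.2

section FiberCounting

variable {β γ : Type*} [DecidableEq γ] (T : Finset β) (f : β → γ)

theorem sum_product_comp_eq_sum_fiber_card (g : γ → γ → ℝ) :
    ∑ x ∈ T ×ˢ T, g (f x.1) (f x.2) =
      ∑ m ∈ T.image f, ∑ l ∈ T.image f,
        (#{p ∈ T | f p = m} : ℝ) * #{p ∈ T | f p = l} * g m l := by
  rw [sum_product, sum_congr rfl fun p _ => sum_comp (g (f p)) f,
    sum_comp (fun m => ∑ l ∈ T.image f, #{p ∈ T | f p = l} • g m l) f]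
  simp only [smul_sum, nsmul_eq_mul, mul_assoc]

theorem card_filter_rel_le_mul_card_filter_eq (R : γ → γ → Prop) [DecidableRel R] {K₁ K₂ : ℝ}
    (h₁ : ∀ m, (#{l ∈ T.image f | R m l} : ℝ) ≤ K₁)
    (h₂ : ∀ l, (#{m ∈ T.image f | R m l} : ℝ) ≤ K₂) :
    (#{x ∈ T ×ˢ T | R (f x.1) (f x.2)} : ℝ) ≤
      (K₁ + K₂) / 2 * #{x ∈ T ×ˢ T | f x.1 = f x.2} := by
  set V := T.image f
  set r : γ → ℝ := fun m => #{p ∈ T | f p = m}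
  have hcard (P : γ → γ → Prop) [DecidableRel P] :
      (#{x ∈ T ×ˢ T | P (f x.1) (f x.2)} : ℝ) =
        ∑ m ∈ V, ∑ l ∈ V, r m * r l * if P m l then 1 else 0 := by
    rw [card_filter, Nat.cast_sum, ← sum_product_comp_eq_sum_fiber_card]
    push_cast
    rfl
  have henergy : (#{x ∈ T ×ˢ T | f x.1 = f x.2} : ℝ) = ∑ m ∈ V, r m ^ 2 := by
    rw [hcard]
    refine sum_congr rfl fun m hm => ?_
    simp [hm, sq]
  have hrow : ∑ m ∈ V, ∑ l ∈ V, r m ^ 2 * (if R m l then 1 else 0) ≤ K₁ * ∑ m ∈ V, r m ^ 2 := by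
    rw [mul_sum]
    refine sum_le_sum fun m _ => ?_
    rw [← mul_sum, sum_boole, mul_comm]
    exact mul_le_mul_of_nonneg_right (h₁ m) (sq_nonneg _)
  have hcol : ∑ m ∈ V, ∑ l ∈ V, r l ^ 2 * (if R m l then 1 else 0) ≤ K₂ * ∑ l ∈ V, r l ^ 2 := by
    rw [sum_comm, mul_sum]
    refine sum_le_sum fun l _ => ?_
    rw [← mul_sum, sum_boole, mul_comm]
    exact mul_le_mul_of_nonneg_right (h₂ l) (sq_nonneg _)
  have hamgm : ∀ m l, r m * r l * (if R m l then 1 else 0 : ℝ) ≤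
      (r m ^ 2 * (if R m l then 1 else 0) + r l ^ 2 * (if R m l then 1 else 0)) / 2 := by
    intro m l
    split_ifs <;> nlinarith [sq_nonneg (r m - r l)]
  rw [hcard, henergy]
  calc ∑ m ∈ V, ∑ l ∈ V, r m * r l * (if R m l then 1 else 0)
      ≤ ∑ m ∈ V, ∑ l ∈ V, (r m ^ 2 * (if R m l then 1 else 0)
          + r l ^ 2 * (if R m l then 1 else 0)) / 2 :=
        sum_le_sum fun m _ => sum_le_sum fun l _ => hamgm m l
    _ ≤ (K₁ + K₂) / 2 * ∑ m ∈ V, r m ^ 2 := by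
        simp only [← sum_div, sum_add_distrib]
        linarith

end FiberCounting

theorem card_filter_abs_sub_mul_le_le {β : Type*} (T : Finset β) (f : β → ℤ) {α ε : ℝ}
    (hα : 0 < α) (hε : 0 ≤ ε) :
    (#{x ∈ T ×ˢ T | |(f x.1 : ℝ) - α * f x.2| ≤ ε} : ℝ) ≤
      (1 / α + 1) * (1 + ε) * #{x ∈ T ×ˢ T | f x.1 = f x.2} := by
  have hrow (m : ℤ) : (#{l ∈ T.image f | |(m : ℝ) - α * (l : ℤ)| ≤ ε} : ℝ) ≤ 2 * ε / α + 1 := by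
    refine (card_le_of_forall_cast_mem_Icc (x := (m - ε) / α) (y := (m + ε) / α)
      (by gcongr; linarith) fun l hl => ?_).trans_eq (by field_simp; ring)
    obtain ⟨h₁, h₂⟩ := abs_le.1 (mem_filter.1 hl).2
    constructor
    · rw [div_le_iff₀ hα]; linarith
    · rw [le_div_iff₀ hα]; linarith
  have hcol (l : ℤ) : (#{m ∈ T.image f | |((m : ℤ) : ℝ) - α * l| ≤ ε} : ℝ) ≤ 2 * ε + 1 := by
    refine (card_le_of_forall_cast_mem_Icc (x := α * l - ε) (y := α * l + ε)
      (by linarith) fun m hm => ?_).trans_eq (by ring)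
    obtain ⟨h₁, h₂⟩ := abs_le.1 (mem_filter.1 hm).2
    constructor <;> linarith
  refine (card_filter_rel_le_mul_card_filter_eq T f (fun m l : ℤ => |(m : ℝ) - α * l| ≤ ε)
    hrow hcol).trans (mul_le_mul_of_nonneg_right ?_ (Nat.cast_nonneg _))
  have : 0 ≤ ε / α := div_nonneg hε hα.le
  field_simp
  nlinarith

theorem eq_and_eq_of_sq_sub_sq_eq {a b c d : ℤ} (h₀ : a + b ≠ 0) (hs : a + b = c + d)
    (hm : a ^ 2 - b ^ 2 = c ^ 2 - d ^ 2) : a = c ∧ b = d := by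
  have hd : a - b = c - d := by
    apply mul_right_cancel₀ h₀
    calc (a - b) * (a + b) = a ^ 2 - b ^ 2 := by ring
      _ = c ^ 2 - d ^ 2 := hm
      _ = (c - d) * (a + b) := by rw [hs]; ring
  constructor <;> linarith

theorem card_filter_dvd_and_dvd_Icc_le {s t K : ℤ} (hs : 0 < s) (ht : 0 < t) (hK : 0 ≤ K) :
    (#{m ∈ Icc (-K) K | s ∣ m ∧ t ∣ m} : ℝ) ≤ 2 * K * s.gcd t / (s * t) + 1 := by
  have hlcm : (0 : ℤ) < s.lcm t := by
    have := Int.lcm_pos hs.ne' ht.ne'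
    exact_mod_cast this
  have hgl : ((s.gcd t : ℕ) : ℝ) * (s.lcm t : ℕ) = s * t := by
    have h : ((s.gcd t * s.lcm t : ℕ) : ℤ) = s * t := by
      rw [Int.gcd_mul_lcm, Nat.cast_mul, Int.natCast_natAbs, Int.natCast_natAbs,
        abs_of_pos hs, abs_of_pos ht]
    exact_mod_cast h
  calc (#{m ∈ Icc (-K) K | s ∣ m ∧ t ∣ m} : ℝ)
      ≤ #{m ∈ Icc (-K) K | (s.lcm t : ℤ) ∣ m} := by
        gcongr with m
        exact fun h => Int.coe_lcm_dvd h.1 h.2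
    _ ≤ (K - ((-K : ℤ) : ℝ)) / (s.lcm t : ℤ) + 1 := card_filter_dvd_Icc_le hlcm (by linarith)
    _ = 2 * K * s.gcd t / (s * t) + 1 := by
        have : (0 : ℝ) < s.gcd t := by exact_mod_cast Int.gcd_pos_of_ne_zero_left t hs.ne'
        rw [← hgl]
        push_cast
        field_simp
        ring

theorem card_sq_sub_sq_eq_le_sum_card_common_multiples {a b : ℤ} (ha : 0 < a) :
    #{x ∈ (Icc a b ×ˢ Icc a b) ×ˢ (Icc a b ×ˢ Icc a b) |
        x.1.1 ^ 2 - x.1.2 ^ 2 = x.2.1 ^ 2 - x.2.2 ^ 2} ≤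
      ∑ st ∈ Icc (2 * a) (2 * b) ×ˢ Icc (2 * a) (2 * b),
        #{m ∈ Icc (-b ^ 2) (b ^ 2) | st.1 ∣ m ∧ st.2 ∣ m} := by
  rw [← card_sigma]
  refine card_le_card_of_injOn
    (fun x => ⟨(x.1.1 + x.1.2, x.2.1 + x.2.2), x.1.1 ^ 2 - x.1.2 ^ 2⟩) ?_ ?_
  · rintro ⟨⟨x₁, x₂⟩, x₃, x₄⟩ hx
    simp only [coe_filter, mem_product, mem_Icc, Set.mem_ofPred_eq] at hx
    obtain ⟨⟨⟨⟨h₁, h₁'⟩, h₂, h₂'⟩, ⟨h₃, h₃'⟩, h₄, h₄'⟩, hm⟩ := hx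
    simp only [coe_sigma, Set.mem_sigma_iff, mem_coe, mem_product, mem_filter, mem_Icc]
    refine ⟨⟨⟨by omega, by omega⟩, by omega, by omega⟩, ⟨by nlinarith, by nlinarith⟩,
      ⟨x₁ - x₂, by ring⟩, ⟨x₃ - x₄, by rw [hm]; ring⟩⟩
  · rintro ⟨⟨x₁, x₂⟩, x₃, x₄⟩ hx ⟨⟨y₁, y₂⟩, y₃, y₄⟩ hy h
    simp only [coe_filter, mem_product, mem_Icc, Set.mem_ofPred_eq] at hx hy
    simp only [Sigma.mk.injEq, Prod.mk.injEq, heq_eq_eq] at h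
    obtain ⟨⟨hs, ht⟩, hm⟩ := h
    obtain ⟨rfl, rfl⟩ := eq_and_eq_of_sq_sub_sq_eq (by omega) hs hm
    obtain ⟨rfl, rfl⟩ := eq_and_eq_of_sq_sub_sq_eq (by omega) ht (by rw [← hx.2, ← hy.2, hm])
    rfl

theorem sum_gcd_le_sum_mul_card_filter_dvd_sq (J : Finset ℤ) (n : ℕ)
    (hJ : ∀ s ∈ J, 0 < s ∧ s ≤ n) :
    ∑ st ∈ J ×ˢ J, (st.1.gcd st.2 : ℝ) ≤ ∑ d ∈ Icc 1 n, (d : ℝ) * #{s ∈ J | (d : ℤ) ∣ s} ^ 2 := by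
  have hgcd : ∀ st ∈ J ×ˢ J, (st.1.gcd st.2 : ℝ) ≤
      ∑ d ∈ Icc 1 n, if (d : ℤ) ∣ st.1 ∧ (d : ℤ) ∣ st.2 then (d : ℝ) else 0 := by
    rintro ⟨s, t⟩ hst
    obtain ⟨hs, hsn⟩ := hJ s (mem_product.1 hst).1
    have hle : ((s.gcd t : ℕ) : ℤ) ≤ n := (Int.le_of_dvd hs (Int.gcd_dvd_left s t)).trans hsn
    refine (single_le_sum (fun d _ => ?_) (mem_Icc.2 ⟨Int.gcd_pos_of_ne_zero_left t hs.ne',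
      by exact_mod_cast hle⟩)).trans_eq' ?_
    · split_ifs <;> positivity
    · simp [Int.gcd_dvd_left, Int.gcd_dvd_right]
  refine (sum_le_sum hgcd).trans_eq ?_
  rw [sum_comm]
  refine sum_congr rfl fun d _ => ?_
  rw [← sum_filter, sum_const, filter_product, card_product, nsmul_eq_mul]
  push_cast
  ring

theorem sum_Icc_mul_div_add_one_sq_le (a : ℝ) (n : ℕ) :
    ∑ d ∈ Icc 1 n, (d : ℝ) * (a / d + 1) ^ 2 ≤ a ^ 2 * (1 + log n) + n * (2 * a + n) := by
  have hharmonic : ∑ d ∈ Icc 1 n, (1 / d : ℝ) ≤ 1 + log n := by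
    have h := harmonic_le_one_add_log n
    rw [harmonic_eq_sum_Icc] at h
    push_cast at h
    simpa [one_div] using h
  calc ∑ d ∈ Icc 1 n, (d : ℝ) * (a / d + 1) ^ 2
      ≤ ∑ d ∈ Icc 1 n, (a ^ 2 * (1 / d) + (2 * a + n)) := by
        refine sum_le_sum fun d hd => ?_
        obtain ⟨hd1, hdn⟩ := mem_Icc.1 hd
        have hd0 : (0 : ℝ) < d := by exact_mod_cast hd1
        have : (d : ℝ) ≤ n := by exact_mod_cast hdn
        have : (d : ℝ) * (a / d + 1) ^ 2 = a ^ 2 * (1 / d) + 2 * a + d := by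
          field_simp
          ring
        linarith
    _ ≤ a ^ 2 * (1 + log n) + n * (2 * a + n) := by
        rw [sum_add_distrib, ← mul_sum, sum_const, Nat.card_Icc, nsmul_eq_mul,
          Nat.add_sub_cancel]
        gcongr

theorem sum_gcd_Icc_le {N : ℕ} (hN : 0 < N) :
    ∑ st ∈ Icc (2 * N : ℤ) (4 * N) ×ˢ Icc (2 * N : ℤ) (4 * N), (st.1.gcd st.2 : ℝ) ≤
      4 * N ^ 2 * (1 + log (4 * N)) + 32 * N ^ 2 := by
  have hmult (d : ℕ) (hd : d ∈ Icc 1 (4 * N)) :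
      (#{s ∈ Icc (2 * N : ℤ) (4 * N) | (d : ℤ) ∣ s} : ℝ) ≤ 2 * N / d + 1 := by
    have h := card_filter_dvd_Icc_le (a := 2 * N) (b := 4 * N) (r := d)
      (by exact_mod_cast (mem_Icc.1 hd).1) (by omega)
    convert h using 2
    push_cast
    ring
  calc ∑ st ∈ Icc (2 * N : ℤ) (4 * N) ×ˢ Icc (2 * N : ℤ) (4 * N), (st.1.gcd st.2 : ℝ)
      ≤ ∑ d ∈ Icc 1 (4 * N), (d : ℝ) * #{s ∈ Icc (2 * N : ℤ) (4 * N) | (d : ℤ) ∣ s} ^ 2 :=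
        sum_gcd_le_sum_mul_card_filter_dvd_sq _ _ fun s hs => by
          rw [mem_Icc] at hs; push_cast; omega
    _ ≤ ∑ d ∈ Icc 1 (4 * N), (d : ℝ) * (2 * N / d + 1) ^ 2 := by
        gcongr with d hd
        exact hmult d hd
    _ ≤ (2 * N) ^ 2 * (1 + log ((4 * N : ℕ) : ℝ)) + (4 * N : ℕ) * (2 * (2 * N) + (4 * N : ℕ)) :=
        sum_Icc_mul_div_add_one_sq_le _ _
    _ = 4 * N ^ 2 * (1 + log (4 * N)) + 32 * N ^ 2 := by push_cast; ring

theorem card_sq_sub_sq_eq_le {N : ℕ} (hN : 2 ≤ N) :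
    (#{x ∈ (Icc (N : ℤ) (2 * N) ×ˢ Icc (N : ℤ) (2 * N)) ×ˢ
          (Icc (N : ℤ) (2 * N) ×ˢ Icc (N : ℤ) (2 * N)) |
        x.1.1 ^ 2 - x.1.2 ^ 2 = x.2.1 ^ 2 - x.2.2 ^ 2} : ℝ) ≤ 200 * N ^ 2 * log N := by
  set J := Icc (2 * N : ℤ) (4 * N)
  have hN' : (2 : ℝ) ≤ N := by exact_mod_cast hN
  have hcommon : ∀ st ∈ J ×ˢ J,
      (#{m ∈ Icc (-(2 * N) ^ 2 : ℤ) ((2 * N) ^ 2) | st.1 ∣ m ∧ st.2 ∣ m} : ℝ) ≤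
        2 * (st.1.gcd st.2 : ℝ) + 1 := by
    rintro ⟨s, t⟩ hst
    simp only [J, mem_product, mem_Icc] at hst
    have hs : (2 * N : ℝ) ≤ s := by exact_mod_cast hst.1.1
    have ht : (2 * N : ℝ) ≤ t := by exact_mod_cast hst.2.1
    refine (card_filter_dvd_and_dvd_Icc_le (K := (2 * N) ^ 2) (by omega) (by omega)
      (by positivity)).trans ?_
    have hst : 4 * (N : ℝ) ^ 2 ≤ s * t := by nlinarith
    gcongr
    rw [div_le_iff₀ (by nlinarith)]
    push_cast
    nlinarith [(by positivity : (0 : ℝ) ≤ (s.gcd t : ℝ))]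
  have hlog2 : 1 ≤ 2 * log N := by
    linarith [log_two_gt_d9, log_le_log two_pos hN']
  have hlog4 : log (4 * N) ≤ 3 * log N := by
    rw [log_mul (by norm_num) (by positivity), show (4 : ℝ) = 2 ^ 2 by norm_num, log_pow]
    push_cast
    linarith [log_le_log two_pos hN']
  calc _ ≤ ∑ st ∈ J ×ˢ J,
        (#{m ∈ Icc (-(2 * N) ^ 2 : ℤ) ((2 * N) ^ 2) | st.1 ∣ m ∧ st.2 ∣ m} : ℝ) := by
        have h := card_sq_sub_sq_eq_le_sum_card_common_multiples (a := N) (b := 2 * N)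
          (by omega)
        rw [show 2 * (2 * (N : ℤ)) = 4 * N by ring] at h
        exact_mod_cast h
    _ ≤ ∑ st ∈ J ×ˢ J, (2 * (st.1.gcd st.2 : ℝ) + 1) := sum_le_sum hcommon
    _ = 2 * ∑ st ∈ J ×ˢ J, (st.1.gcd st.2 : ℝ) + (2 * N + 1) ^ 2 := by
        rw [sum_add_distrib, ← mul_sum, sum_const, card_product, Int.card_Icc,
          show 4 * (N : ℤ) + 1 - 2 * N = ((2 * N + 1 : ℕ) : ℤ) by push_cast; ring,
          Int.toNat_natCast, nsmul_eq_mul]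
        push_cast
        ring
    _ ≤ 2 * (4 * N ^ 2 * (1 + log (4 * N)) + 32 * N ^ 2) + (2 * N + 1) ^ 2 := by
        gcongr
        exact sum_gcd_Icc_le (by omega)
    _ ≤ 200 * N ^ 2 * log N := by nlinarith

theorem stmt_14 (α₂ : ℝ) (hα₂ : 0 < α₂) :
    ∃ C > (0 : ℝ), ∀ N : ℕ, 2 ≤ N → ∀ U : ℝ, (N : ℝ) ≤ U →
      (((((Finset.Icc (N : ℤ) (2 * N) ×ˢ Finset.Icc (N : ℤ) (2 * N)) ×ˢ
          (Finset.Icc (N : ℤ) (2 * N) ×ˢ Finset.Icc (N : ℤ) (2 * N))).filter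
        (fun q => |((q.1.1 : ℝ) ^ 2 - (q.1.2 : ℝ) ^ 2
            - α₂ * ((q.2.1 : ℝ) ^ 2 - (q.2.2 : ℝ) ^ 2))| ≤ (N : ℝ) ^ 2 / U)).card : ℝ))
      ≤ C * (N : ℝ) ^ 2 * (1 + (N : ℝ) ^ 2 / U) * Real.log N := by
  refine ⟨200 * (1 / α₂ + 1), by positivity, fun N hN U hU => ?_⟩
  have hε : 0 ≤ (N : ℝ) ^ 2 / U := div_nonneg (by positivity) ((Nat.cast_nonneg N).trans hU)
  have hreduce := card_filter_abs_sub_mul_le_le (Icc (N : ℤ) (2 * N) ×ˢ Icc (N : ℤ) (2 * N))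
    (fun p => p.1 ^ 2 - p.2 ^ 2) hα₂ hε
  push_cast at hreduce
  refine hreduce.trans ?_
  calc _ ≤ (1 / α₂ + 1) * (1 + (N : ℝ) ^ 2 / U) * (200 * N ^ 2 * log N) := by
        gcongr
        exact card_sq_sub_sq_eq_le hN
    _ = _ := by ring
end

section
/- Let F(x) = x₁² − x₂² − x₃² + x₄², and for N ≥ 2 integer and β > 0, let M(β, N) be the number of integer quadruples N ≤ y₁,y₂,z₁,z₂ ≤ 2N with |(y₁² − y₂²) − (z₁² − z₂²)| ≤ 3β. Let N(β, N, α₂) be the number of integer quadruples (y₁,y₂,y₃,y₄) ∈ [N,2N]⁴ with |y₁² − y₂² − α₂(y₃² − y₄²)| ≤ β, where α₂ > 0. Then N(β, N, α₂) ≪ M(β, N)^{1/2} · M(β/α₂, N)^{1/2}. -/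
/-- `Mcount β N` counts integer quadruples `N ≤ y₁, y₂, z₁, z₂ ≤ 2N` with
`|(y₁² − y₂²) − (z₁² − z₂²)| ≤ 3β`. -/
noncomputable def Mcount (β : ℝ) (N : ℕ) : ℕ :=
  (((Finset.Icc (N : ℤ) (2 * N) ×ˢ Finset.Icc (N : ℤ) (2 * N)) ×ˢ
      (Finset.Icc (N : ℤ) (2 * N) ×ˢ Finset.Icc (N : ℤ) (2 * N))).filter
    (fun q => |((q.1.1 : ℝ) ^ 2 - (q.1.2 : ℝ) ^ 2)
        - ((q.2.1 : ℝ) ^ 2 - (q.2.2 : ℝ) ^ 2)| ≤ 3 * β)).card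

/-- `Ncount β N α₂` counts integer quadruples `(y₁,y₂,y₃,y₄) ∈ [N,2N]⁴` with
`|y₁² − y₂² − α₂(y₃² − y₄²)| ≤ β`. -/
noncomputable def Ncount (β : ℝ) (N : ℕ) (α₂ : ℝ) : ℕ :=
  (((Finset.Icc (N : ℤ) (2 * N) ×ˢ Finset.Icc (N : ℤ) (2 * N)) ×ˢ
      (Finset.Icc (N : ℤ) (2 * N) ×ˢ Finset.Icc (N : ℤ) (2 * N))).filter
    (fun q => |(q.1.1 : ℝ) ^ 2 - (q.1.2 : ℝ) ^ 2
        - α₂ * ((q.2.1 : ℝ) ^ 2 - (q.2.2 : ℝ) ^ 2)| ≤ β)).card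

private lemma floor_diff_le_one {a b : ℝ} (h : |a - b| ≤ 1) : |⌊a⌋ - ⌊b⌋| ≤ 1 := by
  obtain ⟨h1, h2⟩ := abs_le.mp h
  have hb : ⌊b⌋ - 1 ≤ ⌊a⌋ := Int.le_floor.mpr (by push_cast; linarith [Int.floor_le b])
  have ha : ⌊a⌋ - 1 ≤ ⌊b⌋ := Int.le_floor.mpr (by push_cast; linarith [Int.floor_le a])
  rw [abs_le]; omega

private lemma abs_sub_lt_of_floor_eq {a b : ℝ} (h : ⌊a⌋ = ⌊b⌋) : |a - b| < 1 := by
  have h1 : (⌊a⌋ : ℝ) ≤ a := Int.floor_le a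
  have h2 : a < ⌊a⌋ + 1 := Int.lt_floor_add_one a
  have h3 : (⌊b⌋ : ℝ) ≤ b := Int.floor_le b
  have h4 : b < ⌊b⌋ + 1 := Int.lt_floor_add_one b
  have h5 : (⌊a⌋ : ℝ) = ⌊b⌋ := by exact_mod_cast h
  rw [abs_lt]; constructor <;> linarith

private lemma sq_sum_card (B : Finset (ℤ × ℤ)) (g : ℤ × ℤ → ℤ) :
    ∑ κ ∈ B.image g, ((B.filter fun y => g y = κ).card) ^ 2
      = ((B ×ˢ B).filter fun q => g q.1 = g q.2).card := by
  classical
  rw [Finset.card_eq_sum_card_fiberwise (f := fun q => g q.1) (t := B.image g)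
    (fun q hq => Finset.mem_image.mpr
      ⟨q.1, (Finset.mem_product.mp (Finset.mem_filter.mp hq).1).1, rfl⟩)]
  refine Finset.sum_congr rfl fun κ _ => ?_
  rw [sq, ← Finset.card_product]
  congr 1
  ext q
  simp only [Finset.mem_filter, Finset.mem_product, and_assoc]
  constructor
  · rintro ⟨h1, h2, h3, h4⟩; exact ⟨h1, h3, by omega, h2⟩
  · rintro ⟨h1, h2, h3, h4⟩; exact ⟨h1, h4, h2, by omega⟩

set_option maxHeartbeats 1000000 in
theorem stmt_15 (α₂ : ℝ) (hα₂ : 0 < α₂) :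
    ∃ C > (0 : ℝ), ∀ N : ℕ, 2 ≤ N → ∀ β : ℝ, 0 < β →
      (Ncount β N α₂ : ℝ)
        ≤ C * Real.sqrt (Mcount β N) * Real.sqrt (Mcount (β / α₂) N) := by
  classical
  refine ⟨3, by norm_num, ?_⟩
  intro N _ β hβ
  set B : Finset (ℤ × ℤ) := Finset.Icc (N : ℤ) (2 * N) ×ˢ Finset.Icc (N : ℤ) (2 * N) with hB
  set f : ℤ × ℤ → ℝ := fun y => (y.1 : ℝ) ^ 2 - (y.2 : ℝ) ^ 2 with hf
  set k : ℤ × ℤ → ℤ := fun y => ⌊f y / β⌋ with hk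
  set l : ℤ × ℤ → ℤ := fun z => ⌊α₂ * f z / β⌋ with hl
  set K : Finset ℤ := B.image k with hK
  set L : Finset ℤ := B.image l with hL
  set r : ℤ → ℕ := fun κ => (B.filter fun y => k y = κ).card with hr
  set s : ℤ → ℕ := fun κ => (B.filter fun z => l z = κ).card with hs
  set S : Finset ((ℤ × ℤ) × (ℤ × ℤ)) :=
    (B ×ˢ B).filter (fun q => |f q.1 - α₂ * f q.2| ≤ β) with hS
  have hNc : Ncount β N α₂ = S.card := by
    rw [hS, hB]
    simp only [hf]
    rfl
  -- Step 1 : decompose the count into fibers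
  have step1 : S.card ≤ ∑ j ∈ Finset.Icc (-1 : ℤ) 1, ∑ κ ∈ K, r κ * s (κ - j) := by
    rw [Finset.card_eq_sum_card_fiberwise
      (f := fun q : (ℤ × ℤ) × (ℤ × ℤ) => ((k q.1 - l q.2, k q.1) : ℤ × ℤ))
      (t := Finset.Icc (-1 : ℤ) 1 ×ˢ K) ?hmem]
    case hmem =>
      intro q hq
      rw [Finset.mem_coe, hS, Finset.mem_filter, Finset.mem_product] at hq
      obtain ⟨⟨hq1, hq2⟩, habs⟩ := hq
      rw [Finset.mem_coe, Finset.mem_product, Finset.mem_Icc]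
      constructor
      · have h1 : |f q.1 / β - α₂ * f q.2 / β| ≤ 1 := by
          rw [div_sub_div_same, abs_div, abs_of_pos hβ, div_le_one hβ]
          exact habs
        have h2 := floor_diff_le_one h1
        rw [abs_le] at h2
        simp only [hk, hl]
        exact ⟨h2.1, h2.2⟩
      · exact Finset.mem_image.mpr ⟨q.1, hq1, rfl⟩
    rw [Finset.sum_product]
    refine Finset.sum_le_sum fun j _ => Finset.sum_le_sum fun κ _ => ?_
    have hsub : S.filter (fun q => ((k q.1 - l q.2, k q.1) : ℤ × ℤ) = (j, κ))
        ⊆ (B.filter fun y => k y = κ) ×ˢ (B.filter fun z => l z = κ - j) := by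
      intro q hq
      rw [Finset.mem_filter, hS, Finset.mem_filter, Finset.mem_product] at hq
      obtain ⟨⟨⟨hq1, hq2⟩, _⟩, heq⟩ := hq
      rw [Prod.mk.injEq] at heq
      rw [Finset.mem_product, Finset.mem_filter, Finset.mem_filter]
      exact ⟨⟨hq1, heq.2⟩, hq2, by omega⟩
    calc (S.filter (fun q => ((k q.1 - l q.2, k q.1) : ℤ × ℤ) = (j, κ))).card
        ≤ _ := Finset.card_le_card hsub
      _ = r κ * s (κ - j) := by rw [hr, hs]; exact Finset.card_product _ _
  -- square-sum bounds
  have hA : ∑ κ ∈ K, r κ ^ 2 ≤ Mcount β N := by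
    simp only [hr]
    rw [hK, sq_sum_card B k]
    unfold Mcount
    rw [← hB]
    apply Finset.card_le_card
    intro q hq
    rw [Finset.mem_filter] at hq ⊢
    refine ⟨hq.1, ?_⟩
    have hfl : ⌊f q.1 / β⌋ = ⌊f q.2 / β⌋ := by
      have := hq.2; simp only [hk] at this; exact this
    have h1 : |f q.1 / β - f q.2 / β| < 1 := abs_sub_lt_of_floor_eq hfl
    rw [div_sub_div_same, abs_div, abs_of_pos hβ, div_lt_one hβ] at h1
    have hfe : f q.1 - f q.2 = ((q.1.1 : ℝ) ^ 2 - (q.1.2 : ℝ) ^ 2)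
        - ((q.2.1 : ℝ) ^ 2 - (q.2.2 : ℝ) ^ 2) := by simp only [hf]
    rw [← hfe]
    linarith
  have hBs : ∑ lam ∈ L, s lam ^ 2 ≤ Mcount (β / α₂) N := by
    simp only [hs]
    rw [hL, sq_sum_card B l]
    unfold Mcount
    rw [← hB]
    apply Finset.card_le_card
    intro q hq
    rw [Finset.mem_filter] at hq ⊢
    refine ⟨hq.1, ?_⟩
    have hfl : ⌊α₂ * f q.1 / β⌋ = ⌊α₂ * f q.2 / β⌋ := by
      have := hq.2; simp only [hl] at this; exact this
    have h1 : |α₂ * f q.1 / β - α₂ * f q.2 / β| < 1 := abs_sub_lt_of_floor_eq hfl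
    rw [div_sub_div_same, abs_div, abs_of_pos hβ, div_lt_one hβ] at h1
    have h2 : α₂ * f q.1 - α₂ * f q.2 = α₂ * (f q.1 - f q.2) := by ring
    rw [h2, abs_mul, abs_of_pos hα₂] at h1
    have h3 : |f q.1 - f q.2| < β / α₂ := by
      rw [lt_div_iff₀ hα₂]; linarith [mul_comm α₂ |f q.1 - f q.2|]
    have hfe : f q.1 - f q.2 = ((q.1.1 : ℝ) ^ 2 - (q.1.2 : ℝ) ^ 2)
        - ((q.2.1 : ℝ) ^ 2 - (q.2.2 : ℝ) ^ 2) := by simp only [hf]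
    rw [← hfe]
    have hba : 0 < β / α₂ := div_pos hβ hα₂
    linarith
  -- shift bound
  have hshift : ∀ j : ℤ, ∑ κ ∈ K, s (κ - j) ^ 2 ≤ ∑ lam ∈ L, s lam ^ 2 := by
    intro j
    have hinj : ∀ x ∈ K, ∀ y ∈ K, x - j = y - j → x = y := fun x _ y _ h => by omega
    rw [show (∑ κ ∈ K, s (κ - j) ^ 2) = ∑ lam ∈ K.image (fun κ => κ - j), s lam ^ 2 from
      (Finset.sum_image (f := fun lam => s lam ^ 2) hinj).symm]
    apply Finset.sum_le_sum_of_ne_zero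
    intro lam _ hne
    have hcard : (B.filter fun z => l z = lam).card ≠ 0 := by
      intro h0; simp only [hs] at hne; simp [h0] at hne
    obtain ⟨z, hz⟩ := Finset.card_pos.mp (Nat.pos_of_ne_zero hcard)
    rw [Finset.mem_filter] at hz
    rw [hL]
    exact Finset.mem_image.mpr ⟨z, hz.1, hz.2⟩
  -- Cauchy–Schwarz per shift
  have hCS : ∀ j : ℤ, ((∑ κ ∈ K, r κ * s (κ - j) : ℕ) : ℝ)
      ≤ Real.sqrt (Mcount β N) * Real.sqrt (Mcount (β / α₂) N) := by
    intro j
    rw [← Real.sqrt_mul (Nat.cast_nonneg _)]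
    rw [show ((∑ κ ∈ K, r κ * s (κ - j) : ℕ) : ℝ)
        = ∑ κ ∈ K, (r κ : ℝ) * (s (κ - j) : ℝ) by push_cast; ring]
    have hnn : (0 : ℝ) ≤ ∑ κ ∈ K, (r κ : ℝ) * (s (κ - j) : ℝ) :=
      Finset.sum_nonneg fun κ _ => mul_nonneg (Nat.cast_nonneg _) (Nat.cast_nonneg _)
    rw [show (∑ κ ∈ K, (r κ : ℝ) * (s (κ - j) : ℝ))
        = Real.sqrt ((∑ κ ∈ K, (r κ : ℝ) * (s (κ - j) : ℝ)) ^ 2) from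
      (Real.sqrt_sq hnn).symm]
    apply Real.sqrt_le_sqrt
    calc (∑ κ ∈ K, (r κ : ℝ) * (s (κ - j) : ℝ)) ^ 2
        ≤ (∑ κ ∈ K, (r κ : ℝ) ^ 2) * ∑ κ ∈ K, (s (κ - j) : ℝ) ^ 2 :=
          Finset.sum_mul_sq_le_sq_mul_sq K _ _
      _ ≤ (Mcount β N : ℝ) * (Mcount (β / α₂) N : ℝ) := by
          have e1 : (∑ κ ∈ K, (r κ : ℝ) ^ 2) ≤ (Mcount β N : ℝ) := by
            rw [show (∑ κ ∈ K, (r κ : ℝ) ^ 2) = ((∑ κ ∈ K, r κ ^ 2 : ℕ) : ℝ) by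
              push_cast; ring]
            exact_mod_cast hA
          have e2 : (∑ κ ∈ K, (s (κ - j) : ℝ) ^ 2) ≤ (Mcount (β / α₂) N : ℝ) := by
            rw [show (∑ κ ∈ K, (s (κ - j) : ℝ) ^ 2) = ((∑ κ ∈ K, s (κ - j) ^ 2 : ℕ) : ℝ) by
              push_cast; ring]
            exact_mod_cast le_trans (hshift j) hBs
          exact mul_le_mul e1 e2 (Finset.sum_nonneg fun κ _ => sq_nonneg _)
            (Nat.cast_nonneg _)
  -- combine
  rw [hNc]
  calc (S.card : ℝ)
      ≤ ((∑ j ∈ Finset.Icc (-1 : ℤ) 1, ∑ κ ∈ K, r κ * s (κ - j) : ℕ) : ℝ) := by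
        exact_mod_cast step1
    _ = ∑ j ∈ Finset.Icc (-1 : ℤ) 1, ((∑ κ ∈ K, r κ * s (κ - j) : ℕ) : ℝ) := by
        push_cast; ring
    _ ≤ ∑ j ∈ Finset.Icc (-1 : ℤ) 1,
          Real.sqrt (Mcount β N) * Real.sqrt (Mcount (β / α₂) N) :=
        Finset.sum_le_sum fun j _ => hCS j
    _ = 3 * Real.sqrt (Mcount β N) * Real.sqrt (Mcount (β / α₂) N) := by
        rw [Finset.sum_const]
        have h3 : (Finset.Icc (-1 : ℤ) 1).card = 3 := by rw [Int.card_Icc]; rfl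
        rw [h3]
        ring
end
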